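/- arXiv:2307.02860 — 8 statements merged into one kernel-verified Lean document; each statement's English description precedes it below -/
import Mathlib

section
/- For every ω > 0 and every integer n ≥ 4, the variance of the two-element multiset {−ω, ω}, which equals ω², is strictly greater than β_n = 24·σ²(S_n)/(n+2)². -/
open scoped Classical

/-- Mean of a finite multiset of reals (0 for the empty multiset). -/
noncomputable def mmean (S : Multiset ℝ) : ℝ := S.sum / S.card

/-- Population variance of a finite multiset of reals (0 for the empty multiset). -/
noncomputable def mvar (S : Multiset ℝ) : ℝ :=
  ((S.map (fun x => (x - mmean S) ^ 2)).sum) / S.card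

/-- The multiset `S_n`: one copy of `-ω`, one copy of `ω`, and `n` copies of `ω + 3ω/n`. -/
noncomputable def Sn (ω : ℝ) (n : ℕ) : Multiset ℝ :=
  {-ω, ω} + Multiset.replicate n (ω + 3 * ω / n)

theorem stmt4 (ω : ℝ) (hω : 0 < ω) (n : ℕ) (hn : 4 ≤ n) :
    mvar ({-ω, ω} : Multiset ℝ) = ω ^ 2 ∧
    24 * mvar (Sn ω n) / (n + 2) ^ 2 < ω ^ 2 := by
  have hx : (4:ℝ) ≤ (n:ℝ) := by exact_mod_cast hn
  set x : ℝ := (n:ℝ) with hxdef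
  have hx0 : (0:ℝ) < x := by linarith
  constructor
  · simp [mvar, mmean]
  · have h1 : mvar (Sn ω n) =
        ((-ω - mmean (Sn ω n))^2 + (ω - mmean (Sn ω n))^2
          + x * ((ω + 3*ω/x - mmean (Sn ω n))^2)) / (x + 2) := by
      simp [mvar, Sn, Multiset.map_replicate, Multiset.sum_replicate, nsmul_eq_mul]
      ring
    have h2 : mmean (Sn ω n) = (x + 3) * ω / (x + 2) := by
      simp [mmean, Sn, Multiset.sum_replicate, nsmul_eq_mul]
      field_simp
      ring
    rw [h1, h2]
    have h2x : (0:ℝ) < x + 2 := by linarith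
    have key : 24 * x * ((2*x+5)^2 + 1) + 96 * (x+3)^2 < x * (x+2)^5 := by
      have h2 : 4 * x^2 ≤ x^3 := by nlinarith
      have h3 : 4 * x^3 ≤ x^4 := by nlinarith
      have h4 : 4 * x^4 ≤ x^5 := by nlinarith
      have h5 : 4 * x^5 ≤ x^6 := by nlinarith
      have h1 : 4 * x ≤ x^2 := by nlinarith
      nlinarith [h1, h2, h3, h4, h5, hx]
    have e : (-ω - (x + 3) * ω / (x + 2)) ^ 2 + (ω - (x + 3) * ω / (x + 2)) ^ 2 +
        x * (ω + 3 * ω / x - (x + 3) * ω / (x + 2)) ^ 2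
        = ω^2 * (x*((2*x+5)^2+1) + 4*(x+3)^2) / (x*(x+2)^2) := by
      field_simp
      ring
    rw [e]
    have e2 : 24 * (ω^2 * (x*((2*x+5)^2+1) + 4*(x+3)^2) / (x*(x+2)^2*(x+2))) / (x+2)^2
        = (24 * ω^2 * (x*((2*x+5)^2+1) + 4*(x+3)^2)) / (x*(x+2)^5) := by
      field_simp
    rw [div_div, e2, div_lt_iff₀ (by positivity)]
    have hω2 : (0:ℝ) < ω^2 := by positivity
    nlinarith [mul_pos hω2 (sub_pos.mpr key)]
end

section
/- For every ω > 0 and every integer n ≥ 39, the variance of the two-element multiset {ω, ω + 3ω/n}, which equals (9/4)·ω²/n², is strictly greater than β_n = 24·σ²(S_n)/(n+2)². -/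
open scoped Classical

theorem stmt5 (ω : ℝ) (hω : 0 < ω) (n : ℕ) (hn : 39 ≤ n) :
    mvar ({ω, ω + 3 * ω / n} : Multiset ℝ) = (9 / 4) * ω ^ 2 / n ^ 2 ∧
    24 * mvar (Sn ω n) / (n + 2) ^ 2 < mvar ({ω, ω + 3 * ω / n} : Multiset ℝ) := by
  have hn0 : (0:ℝ) < (n:ℝ) := by
    have : (39:ℝ) ≤ (n:ℝ) := by exact_mod_cast hn
    linarith
  have hne : (n:ℝ) ≠ 0 := ne_of_gt hn0
  have h1 : mvar ({ω, ω + 3 * ω / n} : Multiset ℝ) = (9 / 4) * ω ^ 2 / n ^ 2 := by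
    simp only [mvar, mmean, Multiset.insert_eq_cons, Multiset.map_cons, Multiset.map_singleton,
      Multiset.sum_cons, Multiset.sum_singleton, Multiset.card_cons, Multiset.card_singleton]
    push_cast
    field_simp
    ring
  refine ⟨h1, ?_⟩
  rw [h1]
  have h2 : mvar (Sn ω n) =
      (((-ω) - mmean (Sn ω n))^2 + (ω - mmean (Sn ω n))^2
        + n * ((ω + 3 * ω / n) - mmean (Sn ω n))^2) / (n + 2) := by
    simp only [mvar, Sn, Multiset.map_add, Multiset.map_cons, Multiset.insert_eq_cons,
      Multiset.map_singleton, Multiset.map_replicate, Multiset.sum_add, Multiset.sum_cons,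
      Multiset.sum_singleton, Multiset.sum_replicate, Multiset.card_add, Multiset.card_cons,
      Multiset.card_singleton, Multiset.card_replicate, nsmul_eq_mul]
    push_cast
    ring
  have hm : mmean (Sn ω n) = ((n:ℝ) + 3) * ω / ((n:ℝ) + 2) := by
    simp only [mmean, Sn, Multiset.insert_eq_cons, Multiset.sum_add, Multiset.sum_cons,
      Multiset.sum_singleton, Multiset.sum_replicate, Multiset.card_add, Multiset.card_cons,
      Multiset.card_singleton, Multiset.card_replicate, nsmul_eq_mul]
    push_cast
    field_simp
    ring
  rw [h2, hm]
  have hN : (39:ℝ) ≤ (n:ℝ) := by exact_mod_cast hn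
  have h2pos : (0:ℝ) < (n:ℝ) + 2 := by linarith
  rw [div_lt_div_iff₀ (by positivity) (by positivity)]
  have key : 9 * (n:ℝ)^4 - 312 * (n:ℝ)^3 - 1320 * (n:ℝ)^2 - 1440 * (n:ℝ) + 144 > 0 := by
    nlinarith [sq_nonneg ((n:ℝ) - 39), hN]
  have hw2 : 0 < ω^2 := by positivity
  field_simp
  have big : 0 < (9 * (n:ℝ)^4 - 312 * (n:ℝ)^3 - 1320 * (n:ℝ)^2 - 1440 * (n:ℝ) + 144)
      * (ω^2 * ((n:ℝ)^2 * ((n:ℝ) + 2)^3)) :=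
    mul_pos key (by positivity)
  nlinarith [big, mul_pos key h2pos]
end

section
/- Let x_1 ≤ … ≤ x_n be real numbers (n ≥ 2) with mean μ and variance σ², let β > 0, and let s be the number of critical intervals, i.e., of indices i ∈ {1, …, n−1} with x_{i+1} − x_i > 2√β. If s ≥ 2, then σ² > β·s³/(3n). -/
open scoped Classical

private def auxIdx (s : ℕ) (hs : 0 < s) (e : Fin s → ℕ) : ℕ → ℕ :=
  fun p => if h : p < s then e ⟨p, h⟩ else e ⟨s - 1, Nat.sub_lt hs one_pos⟩ + 1

private lemma auxIdx_pos (s : ℕ) (hs : 0 < s) (e : Fin s → ℕ) (p : ℕ) (h : p < s) :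
    auxIdx s hs e p = e ⟨p, h⟩ := dif_pos h

private lemma auxIdx_neg (s : ℕ) (hs : 0 < s) (e : Fin s → ℕ) (p : ℕ) (h : ¬ p < s) :
    auxIdx s hs e p = e ⟨s - 1, Nat.sub_lt hs one_pos⟩ + 1 := dif_neg h

private lemma double_sum_sq (F : Finset ℕ) (a : ℕ → ℝ) :
    ∑ p ∈ F, ∑ q ∈ F, (a p - a q)^2
      = 2 * F.card * (∑ p ∈ F, (a p)^2) - 2 * (∑ p ∈ F, a p)^2 := by
  have h1 : ∀ p : ℕ, ∑ q ∈ F, (a p - a q)^2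
      = F.card * (a p)^2 - 2 * (a p * ∑ q ∈ F, a q) + ∑ q ∈ F, (a q)^2 := by
    intro p
    have : ∀ q ∈ F, (a p - a q)^2 = (a p)^2 - 2 * (a p * a q) + (a q)^2 :=
      fun q _ => by ring
    rw [Finset.sum_congr rfl this, Finset.sum_add_distrib, Finset.sum_sub_distrib,
      Finset.sum_const, nsmul_eq_mul]
    simp only [← Finset.mul_sum]
  rw [Finset.sum_congr rfl fun p _ => h1 p, Finset.sum_add_distrib, Finset.sum_sub_distrib,
    Finset.sum_const, nsmul_eq_mul]
  simp only [← Finset.mul_sum, ← Finset.sum_mul]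
  ring

private lemma sum_range_cast (k : ℕ) :
    ∑ p ∈ Finset.range k, (p : ℝ) = k * (k - 1) / 2 := by
  induction k with
  | zero => simp
  | succ k ih => rw [Finset.sum_range_succ, ih]; push_cast; ring

private lemma sum_range_cast_sq (k : ℕ) :
    ∑ p ∈ Finset.range k, (p : ℝ)^2 = k * (k - 1) * (2 * k - 1) / 6 := by
  induction k with
  | zero => simp
  | succ k ih => rw [Finset.sum_range_succ, ih]; push_cast; ring

set_option maxHeartbeats 1000000 in
theorem stmt6 (n : ℕ) (hn : 2 ≤ n) (x : ℕ → ℝ)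
    (hmono : ∀ i, 1 ≤ i → i < n → x i ≤ x (i + 1))
    (β : ℝ) (hβ : 0 < β)
    (μ σ2 : ℝ)
    (hμ : μ = (∑ i ∈ Finset.Icc 1 n, x i) / n)
    (hσ : σ2 = (∑ i ∈ Finset.Icc 1 n, (x i - μ) ^ 2) / n)
    (s : ℕ)
    (hs : s = ((Finset.Ico 1 n).filter
      (fun i => 2 * Real.sqrt β < x (i + 1) - x i)).card)
    (hs2 : 2 ≤ s) :
    β * (s : ℝ) ^ 3 / (3 * n) < σ2 := by
  set g : ℝ := Real.sqrt β with hgdef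
  have hg : 0 < g := Real.sqrt_pos.mpr hβ
  have hg2 : g ^ 2 = β := Real.sq_sqrt hβ.le
  set C : Finset ℕ := (Finset.Ico 1 n).filter
      (fun i => 2 * Real.sqrt β < x (i + 1) - x i) with hCdef
  have hcard : C.card = s := hs.symm
  have hs0 : 0 < s := by omega
  set e : Fin s → ℕ := fun i => C.orderEmbOfFin hcard i with hedef
  have hemem : ∀ i : Fin s, (1 ≤ e i ∧ e i < n) ∧ 2 * g < x (e i + 1) - x (e i) := by
    intro i
    have h0 := Finset.orderEmbOfFin_mem C hcard i
    have h1 : e i ∈ (Finset.Ico 1 n).filter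
      (fun i => 2 * Real.sqrt β < x (i + 1) - x i) := h0
    rw [Finset.mem_filter, Finset.mem_Ico] at h1
    exact h1
  have hemono : ∀ i j : Fin s, i < j → e i < e j := fun i j hij =>
    (C.orderEmbOfFin hcard).strictMono hij
  set idx : ℕ → ℕ := auxIdx s hs0 e with hidxdef
  -- monotonicity of x on [1, n]
  have hxmono : ∀ b a : ℕ, 1 ≤ a → a ≤ b → b ≤ n → x a ≤ x b := by
    intro b
    induction b with
    | zero => intro a h1 hab _; exact absurd hab (by omega)
    | succ b ih =>
      intro a h1 hab hbn
      rcases eq_or_lt_of_le hab with h | h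
      · exact le_of_eq (by rw [h])
      · have hab' : a ≤ b := by omega
        exact le_trans (ih a h1 hab' (by omega)) (hmono b (le_trans h1 hab') (by omega))
  -- range of idx
  have hrange : ∀ p, p ≤ s → 1 ≤ idx p ∧ idx p ≤ n := by
    intro p hp
    by_cases h : p < s
    · rw [hidxdef, auxIdx_pos s hs0 e p h]
      have := (hemem ⟨p, h⟩).1
      omega
    · rw [hidxdef, auxIdx_neg s hs0 e p h]
      have := (hemem ⟨s - 1, Nat.sub_lt hs0 one_pos⟩).1
      omega
  -- single step
  have hstep : ∀ p, p + 1 ≤ s → x (idx p) + 2 * g < x (idx (p + 1)) := by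
    intro p hp
    have hps : p < s := hp
    have h1 : idx p = e ⟨p, hps⟩ := auxIdx_pos s hs0 e p hps
    have hcrit := (hemem ⟨p, hps⟩).2
    have h2 : e ⟨p, hps⟩ + 1 ≤ idx (p + 1) := by
      by_cases h : p + 1 < s
      · rw [hidxdef, auxIdx_pos s hs0 e (p + 1) h]
        have := hemono ⟨p, hps⟩ ⟨p + 1, h⟩ (by simp [Fin.lt_def])
        omega
      · rw [hidxdef, auxIdx_neg s hs0 e (p + 1) h]
        have hq : (⟨s - 1, Nat.sub_lt hs0 one_pos⟩ : Fin s) = ⟨p, hps⟩ := by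
          congr 1; omega
        rw [hq]
    have h3 : x (e ⟨p, hps⟩ + 1) ≤ x (idx (p + 1)) :=
      hxmono (idx (p + 1)) (e ⟨p, hps⟩ + 1) (by omega) h2 (hrange (p + 1) hp).2
    rw [h1]
    linarith
  -- multi-step gaps
  have hgap : ∀ d p, p + (d + 1) ≤ s →
      x (idx p) + 2 * g * ((d : ℝ) + 1) < x (idx (p + (d + 1))) := by
    intro d
    induction d with
    | zero => intro p hp; simpa using hstep p hp
    | succ d ih =>
      intro p hp
      have h1 := ih p (by omega)
      have h2 := hstep (p + (d + 1)) (by omega)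
      have : p + (d + 1) + 1 = p + (d + 1 + 1) := by omega
      rw [this] at h2
      push_cast
      push_cast at h1
      linarith
  -- pairwise
  have hpair : ∀ p q, p < q → q ≤ s →
      2 * g * ((q : ℝ) - (p : ℝ)) < x (idx q) - x (idx p) := by
    intro p q hpq hq
    obtain ⟨d, rfl⟩ : ∃ d, q = p + (d + 1) := ⟨q - p - 1, by omega⟩
    have := hgap d p hq
    have hc : ((p + (d + 1) : ℕ) : ℝ) - (p : ℝ) = (d : ℝ) + 1 := by push_cast; ring
    rw [hc]
    linarith
  -- sums
  set F : Finset ℕ := Finset.range (s + 1) with hFdef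
  set a : ℕ → ℝ := fun p => x (idx p) - μ with hadef
  set T : ℝ := ∑ p ∈ F, (a p) ^ 2 with hTdef
  set S : ℝ := ∑ p ∈ F, a p with hSdef
  have hinj : ∀ p ∈ F, ∀ q ∈ F, idx p = idx q → p = q := by
    intro p hp q hq hpq
    rw [hFdef, Finset.mem_range] at hp hq
    by_contra hne
    have key : ∀ p q : ℕ, p < q → q ≤ s → idx p ≠ idx q := by
      intro p q h hq' heq
      have h1 := hpair p q h hq'
      have hc : (0:ℝ) < 2 * g * ((q:ℝ) - p) := by
        have : (p:ℝ) < q := by exact_mod_cast h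
        have := hg
        nlinarith
      rw [heq] at h1
      linarith
    rcases lt_or_gt_of_ne hne with h | h
    · exact key p q h (by omega) hpq
    · exact key q p h (by omega) hpq.symm
  have himg : ∑ i ∈ F.image idx, (x i - μ) ^ 2 = T := Finset.sum_image hinj
  have hTle : T ≤ ∑ i ∈ Finset.Icc 1 n, (x i - μ) ^ 2 := by
    rw [← himg]
    apply Finset.sum_le_sum_of_subset_of_nonneg
    · intro i hi
      rw [Finset.mem_image] at hi
      obtain ⟨p, hp, rfl⟩ := hi
      rw [hFdef, Finset.mem_range] at hp
      have := hrange p (by omega)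
      rw [Finset.mem_Icc]; omega
    · intro i _ _; positivity
  have hterm : ∀ p q : ℕ, p ≤ s → q ≤ s → 4 * g ^ 2 * ((p:ℝ) - q) ^ 2 ≤ (a p - a q) ^ 2 := by
    have base : ∀ p q : ℕ, p < q → q ≤ s → 4 * g ^ 2 * ((p:ℝ) - q) ^ 2 ≤ (a p - a q) ^ 2 := by
      intro p q h hq
      have h1 := hpair p q h hq
      have h0 : 0 ≤ 2 * g * ((q:ℝ) - p) := by
        have hpq : (p:ℝ) ≤ q := by exact_mod_cast h.le
        have := hg.le
        nlinarith
      calc 4 * g ^ 2 * ((p:ℝ) - q) ^ 2 = (2 * g * ((q:ℝ) - p)) ^ 2 := by ring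
        _ ≤ (x (idx q) - x (idx p)) ^ 2 := by
            exact pow_le_pow_left₀ h0 h1.le 2
        _ = (a p - a q) ^ 2 := by simp only [hadef]; ring
    intro p q hp hq
    rcases lt_trichotomy p q with h | h | h
    · exact base p q h hq
    · subst h; simp
    · have := base q p h hp
      calc 4 * g ^ 2 * ((p:ℝ) - q) ^ 2 = 4 * g ^ 2 * ((q:ℝ) - p) ^ 2 := by ring
        _ ≤ (a q - a p) ^ 2 := this
        _ = (a p - a q) ^ 2 := by ring
  have hstrict01 : 4 * g ^ 2 * (((0:ℕ):ℝ) - ((1:ℕ):ℝ)) ^ 2 < (a 0 - a 1) ^ 2 := by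
    have h1 := hpair 0 1 (by omega) (by omega)
    have h0 : 0 ≤ 2 * g * (((1:ℕ):ℝ) - ((0:ℕ):ℝ)) := by
      push_cast
      nlinarith [hg.le]
    calc 4 * g ^ 2 * (((0:ℕ):ℝ) - ((1:ℕ):ℝ)) ^ 2
        = (2 * g * (((1:ℕ):ℝ) - ((0:ℕ):ℝ))) ^ 2 := by ring
      _ < (x (idx 1) - x (idx 0)) ^ 2 := by
          exact pow_lt_pow_left₀ h1 h0 (by norm_num)
      _ = (a 0 - a 1) ^ 2 := by simp only [hadef]; ring
  have hprod : ∑ p ∈ F, ∑ q ∈ F, 4 * g ^ 2 * ((p:ℝ) - q) ^ 2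
      < ∑ p ∈ F, ∑ q ∈ F, (a p - a q) ^ 2 := by
    apply Finset.sum_lt_sum
    · intro p hp
      rw [hFdef, Finset.mem_range] at hp
      apply Finset.sum_le_sum
      intro q hq
      rw [hFdef, Finset.mem_range] at hq
      exact hterm p q (by omega) (by omega)
    · refine ⟨0, by rw [hFdef, Finset.mem_range]; omega, ?_⟩
      apply Finset.sum_lt_sum
      · intro q hq
        rw [hFdef, Finset.mem_range] at hq
        exact hterm 0 q (by omega) (by omega)
      · exact ⟨1, by rw [hFdef, Finset.mem_range]; omega, hstrict01⟩
  have hnum : ∑ p ∈ F, ∑ q ∈ F, ((p:ℝ) - q) ^ 2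
      = ((s:ℝ) + 1) ^ 2 * (((s:ℝ) + 1) ^ 2 - 1) / 6 := by
    rw [hFdef, double_sum_sq (Finset.range (s + 1)) (fun p => (p:ℝ)),
      Finset.card_range, sum_range_cast, sum_range_cast_sq]
    push_cast
    ring
  have hLHS : ∑ p ∈ F, ∑ q ∈ F, 4 * g ^ 2 * ((p:ℝ) - q) ^ 2
      = 4 * g ^ 2 * ∑ p ∈ F, ∑ q ∈ F, ((p:ℝ) - q) ^ 2 := by
    simp only [← Finset.mul_sum]
  have hRHS : ∑ p ∈ F, ∑ q ∈ F, (a p - a q) ^ 2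
      = 2 * ((s:ℝ) + 1) * T - 2 * S ^ 2 := by
    rw [double_sum_sq F a, hFdef, Finset.card_range]
    push_cast
    ring
  have key : 4 * g ^ 2 * (((s:ℝ) + 1) ^ 2 * (((s:ℝ) + 1) ^ 2 - 1) / 6)
      < 2 * ((s:ℝ) + 1) * T - 2 * S ^ 2 := by
    rw [← hnum, ← hRHS, ← hLHS]
    exact hprod
  have hu : (2:ℝ) ≤ (s:ℝ) := by exact_mod_cast hs2
  clear_value T S a F idx e C g
  clear hprod hnum hLHS hRHS himg hinj hterm hstrict01 hpair hgap hstep hrange hxmono hemem hemono hSdef hTdef hadef hFdef hidxdef hedef hCdef hs hcard hmono hμ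
  have hfinal : β * (s:ℝ) ^ 3 / 3 < T := by
    have h7 : 4 * β * (((s:ℝ) + 1) ^ 2 * (((s:ℝ) + 1) ^ 2 - 1) / 6)
        < 2 * ((s:ℝ) + 1) * T := by
      rw [← hg2]
      nlinarith [sq_nonneg S, key]
    have h8 : β * (s:ℝ) ^ 3 * (2 * ((s:ℝ) + 1))
        ≤ 4 * β * (((s:ℝ) + 1) ^ 2 * (((s:ℝ) + 1) ^ 2 - 1) / 6) * 3 := by
      nlinarith [mul_nonneg hβ.le
        (by positivity : (0:ℝ) ≤ ((s:ℝ) + 1) * (3 * (s:ℝ) ^ 2 + 2 * (s:ℝ)))]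
    have h9 : β * (s:ℝ) ^ 3 * (2 * ((s:ℝ) + 1)) < 6 * ((s:ℝ) + 1) * T := by linarith
    have hup : (0:ℝ) < (s:ℝ) + 1 := by positivity
    nlinarith [h9, hup]
  have hnpos : (0:ℝ) < n := by
    have : 0 < n := by omega
    exact_mod_cast this
  rw [hσ]
  have hrw : β * (s:ℝ) ^ 3 / (3 * n) = (β * (s:ℝ) ^ 3 / 3) / n := by
    rw [div_div]
  rw [hrw]
  exact div_lt_div_of_pos_right (lt_of_lt_of_le hfinal hTle) hnpos
end

section
/- Let x_1 ≤ … ≤ x_n be real numbers (n ≥ 2) with variance σ² > 0, and set β = 24σ²/n². Then the number s of critical intervals, i.e., of indices i ∈ {1, …, n−1} with x_{i+1} − x_i > 2√β, satisfies s < n/2. -/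
open scoped Classical

theorem stmt7_cube : ∀ u v : ℕ, u ≤ v →
    ((u:ℝ) + (v:ℝ) + 1) ^ 3 ≤ 2 * (u:ℝ) * ((u:ℝ) + 1) * (2 * (u:ℝ) + 1)
      + 2 * (v:ℝ) * ((v:ℝ) + 1) * (2 * (v:ℝ) + 1) + 12 * ((u:ℝ) * ((u:ℝ) + 1)) + 6 := by
  intro u v huv
  have hu : (0:ℝ) ≤ u := Nat.cast_nonneg u
  rcases eq_or_lt_of_le huv with rfl | hlt
  · nlinarith [hu]
  · have h1 : (1:ℝ) ≤ (v:ℝ) - u := by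
      have h2 : u + 1 ≤ v := hlt
      have h3 : ((u:ℝ)) + 1 ≤ v := by exact_mod_cast h2
      linarith
    nlinarith [mul_nonneg (mul_nonneg (by linarith : (0:ℝ) ≤ (u:ℝ) + (v:ℝ) + 1)
        (by linarith : (0:ℝ) ≤ (v:ℝ) - u)) (by linarith : (0:ℝ) ≤ (v:ℝ) - u - 1),
      mul_nonneg (by linarith : (0:ℝ) ≤ (u:ℝ) + (v:ℝ)) (by linarith : (0:ℝ) ≤ (v:ℝ) - u),
      hu, h1]

set_option maxHeartbeats 1000000 in
theorem stmt7 (n : ℕ) (hn : 2 ≤ n) (x : ℕ → ℝ)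
    (hmono : ∀ i, 1 ≤ i → i < n → x i ≤ x (i + 1))
    (μ σ2 : ℝ)
    (hμ : μ = (∑ i ∈ Finset.Icc 1 n, x i) / n)
    (hσ : σ2 = (∑ i ∈ Finset.Icc 1 n, (x i - μ) ^ 2) / n)
    (hσpos : 0 < σ2)
    (β : ℝ) (hβ : β = 24 * σ2 / (n : ℝ) ^ 2)
    (s : ℕ)
    (hs : s = ((Finset.Ico 1 n).filter
      (fun i => 2 * Real.sqrt β < x (i + 1) - x i)).card) :
    (s : ℝ) < (n : ℝ) / 2 := by
  by_contra hcon
  push_neg at hcon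
  have hn0 : 0 < n := by omega
  have hnR : (0:ℝ) < n := by exact_mod_cast hn0
  have hn2s : n ≤ 2 * s := by
    by_contra h
    have h2 : (2 * s : ℕ) < n := by omega
    have h3 : 2 * (s:ℝ) < n := by exact_mod_cast h2
    linarith
  have hs1 : 1 ≤ s := by omega
  have hβpos : 0 < β := by rw [hβ]; positivity
  have hsqβ : 0 < Real.sqrt β := Real.sqrt_pos.mpr hβpos
  set g : ℝ := 2 * Real.sqrt β with hg
  have hgpos : 0 < g := by rw [hg]; positivity
  have hg2 : g ^ 2 = 4 * β := by
    rw [hg, mul_pow, Real.sq_sqrt hβpos.le]; ring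
  have hgn : g ^ 2 * (n:ℝ) ^ 2 = 96 * σ2 := by
    rw [hg2, hβ]; field_simp; ring
  set C := (Finset.Ico 1 n).filter (fun i => g < x (i + 1) - x i) with hCdef
  have hsC : s = C.card := hs
  have hCmem : ∀ i ∈ C, 1 ≤ i ∧ i < n ∧ g < x (i + 1) - x i := by
    intro i hi
    rw [hCdef, Finset.mem_filter, Finset.mem_Ico] at hi
    exact ⟨hi.1.1, hi.1.2, hi.2⟩
  have mono : ∀ i j : ℕ, 1 ≤ i → i ≤ j → j ≤ n → x i ≤ x j := by
    intro i j hi hij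
    induction j, hij using Nat.le_induction with
    | base => intro _; exact le_refl _
    | succ j hij ih =>
      intro hjn
      have h1 : x i ≤ x j := ih (by omega)
      have h2 : x j ≤ x (j + 1) := hmono j (by omega) (by omega)
      linarith
  have hsum : σ2 * n = ∑ i ∈ Finset.Icc 1 n, (x i - μ) ^ 2 :=
    (eq_div_iff hnR.ne').mp hσ
  set R := C.filter (fun i => μ ≤ x i) with hRdef
  set L := C.filter (fun i => x (i + 1) ≤ μ) with hLdef
  set a := L.card with hadef
  set b := R.card with hbdef
  set r : ℕ → ℕ := fun i => (R.filter (fun j => j < i)).card with hrdef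
  set l : ℕ → ℕ := fun i => (L.filter (fun j => i ≤ j)).card with hldef
  have hrcard : ∀ i, r i = (R.filter (fun j => j < i)).card := fun _ => rfl
  have hlcard : ∀ i, l i = (L.filter (fun j => i ≤ j)).card := fun _ => rfl
  clear_value g C R L a b r l
  have hRmem : ∀ j ∈ R, (1 ≤ j ∧ j < n ∧ g < x (j + 1) - x j) ∧ μ ≤ x j := by
    intro j hj
    rw [hRdef, Finset.mem_filter] at hj
    exact ⟨hCmem j hj.1, hj.2⟩
  have hLmem : ∀ j ∈ L, (1 ≤ j ∧ j < n ∧ g < x (j + 1) - x j) ∧ x (j + 1) ≤ μ := by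
    intro j hj
    rw [hLdef, Finset.mem_filter] at hj
    exact ⟨hCmem j hj.1, hj.2⟩
  have hbn : b ≤ n - 1 := by
    have hsub : R ⊆ Finset.Ico 1 n := by
      intro j hj
      have := hRmem j hj
      rw [Finset.mem_Ico]
      exact ⟨this.1.1, this.1.2.1⟩
    calc b = R.card := hbdef
      _ ≤ (Finset.Ico 1 n).card := Finset.card_le_card hsub
      _ = n - 1 := by rw [Nat.card_Ico]
  have han : a ≤ n - 1 := by
    have hsub : L ⊆ Finset.Ico 1 n := by
      intro j hj
      have := hLmem j hj
      rw [Finset.mem_Ico]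
      exact ⟨this.1.1, this.1.2.1⟩
    calc a = L.card := hadef
      _ ≤ (Finset.Ico 1 n).card := Finset.card_le_card hsub
      _ = n - 1 := by rw [Nat.card_Ico]
  -- K1 : right-chain lower bound
  have K1 : ∀ k : ℕ, ∀ i : ℕ, 1 ≤ i → i ≤ n → k + 1 ≤ r i → μ + g * ((k:ℝ) + 1) < x i := by
    intro k
    induction k with
    | zero =>
      intro i hi1 hin hri
      have hne : (R.filter (fun j => j < i)).Nonempty := by
        rw [← Finset.card_pos, ← hrcard i]; omega
      obtain ⟨j, hj⟩ := hne
      rw [Finset.mem_filter] at hj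
      have hjR := hRmem j hj.1
      have hx1 : x (j + 1) ≤ x i := mono (j + 1) i (by omega) (by omega) hin
      push_cast
      linarith [hjR.1.2.2, hjR.2]
    | succ k ih =>
      intro i hi1 hin hri
      have hne : (R.filter (fun j => j < i)).Nonempty := by
        rw [← Finset.card_pos, ← hrcard i]; omega
      set j := (R.filter (fun j => j < i)).max' hne with hjdef
      have hjmem : j ∈ R.filter (fun j => j < i) := Finset.max'_mem _ hne
      rw [Finset.mem_filter] at hjmem
      have hjR := hRmem j hjmem.1
      have hrj : k + 1 ≤ r j := by
        have hsub : (R.filter (fun j => j < i)).erase j ⊆ R.filter (fun e => e < j) := by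
          intro e he
          rw [Finset.mem_erase] at he
          rw [Finset.mem_filter] at he ⊢
          refine ⟨he.2.1, ?_⟩
          have hle : e ≤ j := Finset.le_max' _ e (by rw [Finset.mem_filter]; exact he.2)
          omega
        have hcard := Finset.card_le_card hsub
        rw [Finset.card_erase_of_mem (by rw [Finset.mem_filter]; exact hjmem)] at hcard
        rw [hrcard i] at hri
        rw [hrcard j]
        omega
      have hxj := ih j hjR.1.1 (by omega) hrj
      have hx1 : x (j + 1) ≤ x i := mono (j + 1) i (by omega) (by omega) hin
      push_cast
      push_cast at hxj
      linarith [hjR.1.2.2]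
  -- K1' : left-chain upper bound
  have K1' : ∀ k : ℕ, ∀ i : ℕ, 1 ≤ i → i ≤ n → k + 1 ≤ l i → x i < μ - g * ((k:ℝ) + 1) := by
    intro k
    induction k with
    | zero =>
      intro i hi1 hin hli
      have hne : (L.filter (fun j => i ≤ j)).Nonempty := by
        rw [← Finset.card_pos, ← hlcard i]; omega
      obtain ⟨j, hj⟩ := hne
      rw [Finset.mem_filter] at hj
      have hjL := hLmem j hj.1
      have hx1 : x i ≤ x j := mono i j hi1 hj.2 (by omega)
      push_cast
      linarith [hjL.1.2.2, hjL.2]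
    | succ k ih =>
      intro i hi1 hin hli
      have hne : (L.filter (fun j => i ≤ j)).Nonempty := by
        rw [← Finset.card_pos, ← hlcard i]; omega
      set j := (L.filter (fun j => i ≤ j)).min' hne with hjdef
      have hjmem : j ∈ L.filter (fun j => i ≤ j) := Finset.min'_mem _ hne
      rw [Finset.mem_filter] at hjmem
      have hjL := hLmem j hjmem.1
      have hlj : k + 1 ≤ l (j + 1) := by
        have hsub : (L.filter (fun j => i ≤ j)).erase j ⊆ L.filter (fun e => j + 1 ≤ e) := by
          intro e he
          rw [Finset.mem_erase] at he
          rw [Finset.mem_filter] at he ⊢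
          refine ⟨he.2.1, ?_⟩
          have hle : j ≤ e := Finset.min'_le _ e (by rw [Finset.mem_filter]; exact he.2)
          omega
        have hcard := Finset.card_le_card hsub
        rw [Finset.card_erase_of_mem (by rw [Finset.mem_filter]; exact hjmem)] at hcard
        rw [hlcard i] at hli
        rw [hlcard (j + 1)]
        omega
      have hxj := ih (j + 1) (by omega) (by omega) hlj
      have hx1 : x i ≤ x j := mono i j hi1 hjmem.2 (by omega)
      push_cast
      push_cast at hxj
      linarith [hjL.1.2.2]
  -- generic sum bounds via injections
  have sumR : ∀ f : ℕ → ℝ, Monotone f → (∀ k, 0 ≤ f k) →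
      ∑ k ∈ Finset.Icc 1 b, f k ≤ ∑ i ∈ Finset.Icc 1 n, f (r i) := by
    intro f hf hf0
    have hkey : ∀ k ∈ Finset.Icc 1 b, k ≤ r (n - b + k) := by
      intro k hk
      rw [Finset.mem_Icc] at hk
      have hcompl : (R.filter (fun j => ¬ j < n - b + k)).card ≤ b - k := by
        have hsub : R.filter (fun j => ¬ j < n - b + k) ⊆ Finset.Icc (n - b + k) (n - 1) := by
          intro e he
          rw [Finset.mem_filter] at he
          have := hRmem e he.1
          rw [Finset.mem_Icc]
          omega
        calc (R.filter (fun j => ¬ j < n - b + k)).card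
            ≤ (Finset.Icc (n - b + k) (n - 1)).card := Finset.card_le_card hsub
          _ = n - 1 + 1 - (n - b + k) := by rw [Nat.card_Icc]
          _ = b - k := by omega
      have htot := Finset.card_filter_add_card_filter_not
        (s := R) (p := fun j => j < n - b + k)
      rw [hrcard (n - b + k)]
      omega
    calc ∑ k ∈ Finset.Icc 1 b, f k
        ≤ ∑ k ∈ Finset.Icc 1 b, f (r (n - b + k)) := by
          apply Finset.sum_le_sum
          intro k hk
          exact hf (hkey k hk)
      _ = ∑ i ∈ (Finset.Icc 1 b).image (fun k => n - b + k), f (r i) := by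
          rw [Finset.sum_image]
          intro u hu v hv huv
          simp only at huv
          omega
      _ ≤ ∑ i ∈ Finset.Icc 1 n, f (r i) := by
          apply Finset.sum_le_sum_of_subset_of_nonneg
          · intro i hi
            rw [Finset.mem_image] at hi
            obtain ⟨k, hk, rfl⟩ := hi
            rw [Finset.mem_Icc] at hk ⊢
            omega
          · intro i _ _
            exact hf0 _
  have sumL : ∀ f : ℕ → ℝ, Monotone f → (∀ k, 0 ≤ f k) →
      ∑ k ∈ Finset.Icc 1 a, f k ≤ ∑ i ∈ Finset.Icc 1 n, f (l i) := by
    intro f hf hf0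
    have hkey : ∀ k ∈ Finset.Icc 1 a, k ≤ l (a + 1 - k) := by
      intro k hk
      rw [Finset.mem_Icc] at hk
      have hcompl : (L.filter (fun j => ¬ (a + 1 - k) ≤ j)).card ≤ a - k := by
        have hsub : L.filter (fun j => ¬ (a + 1 - k) ≤ j) ⊆ Finset.Icc 1 (a - k) := by
          intro e he
          rw [Finset.mem_filter] at he
          have := hLmem e he.1
          rw [Finset.mem_Icc]
          omega
        calc (L.filter (fun j => ¬ (a + 1 - k) ≤ j)).card
            ≤ (Finset.Icc 1 (a - k)).card := Finset.card_le_card hsub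
          _ = a - k := by rw [Nat.card_Icc]; omega
      have htot := Finset.card_filter_add_card_filter_not
        (s := L) (p := fun j => (a + 1 - k) ≤ j)
      rw [hlcard (a + 1 - k)]
      omega
    calc ∑ k ∈ Finset.Icc 1 a, f k
        ≤ ∑ k ∈ Finset.Icc 1 a, f (l (a + 1 - k)) := by
          apply Finset.sum_le_sum
          intro k hk
          exact hf (hkey k hk)
      _ = ∑ i ∈ (Finset.Icc 1 a).image (fun k => a + 1 - k), f (l i) := by
          rw [Finset.sum_image]
          intro u hu v hv huv
          rw [Finset.coe_Icc, Set.mem_Icc] at hu hv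
          simp only at huv
          omega
      _ ≤ ∑ i ∈ Finset.Icc 1 n, f (l i) := by
          apply Finset.sum_le_sum_of_subset_of_nonneg
          · intro i hi
            rw [Finset.mem_image] at hi
            obtain ⟨k, hk, rfl⟩ := hi
            rw [Finset.mem_Icc] at hk ⊢
            omega
          · intro i _ _
            exact hf0 _
  -- closed forms
  have sumsq : ∀ m : ℕ, 12 * ∑ k ∈ Finset.Icc 1 m, ((k:ℝ)) ^ 2
      = 2 * m * (m + 1) * (2 * m + 1) := by
    intro m
    induction m with
    | zero => simp
    | succ m ih =>
      rw [Finset.sum_Icc_succ_top (by omega : 1 ≤ m + 1)]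
      push_cast
      push_cast at ih
      linear_combination ih
  have sumlin : ∀ m : ℕ, 2 * ∑ k ∈ Finset.Icc 1 m, ((k:ℝ))
      = m * (m + 1) := by
    intro m
    induction m with
    | zero => simp
    | succ m ih =>
      rw [Finset.sum_Icc_succ_top (by omega : 1 ≤ m + 1)]
      push_cast
      push_cast at ih
      linear_combination ih
  have fsqmono : Monotone (fun k : ℕ => ((k:ℝ)) ^ 2) := by
    intro u v huv
    have : (u:ℝ) ≤ v := by exact_mod_cast huv
    exact pow_le_pow_left₀ (by positivity) this 2
  have fsqnn : ∀ k : ℕ, (0:ℝ) ≤ ((k:ℝ)) ^ 2 := fun k => by positivity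
  have flinmono : Monotone (fun k : ℕ => ((k:ℝ))) := Nat.mono_cast
  have flinnn : ∀ k : ℕ, (0:ℝ) ≤ ((k:ℝ)) := fun k => by positivity
  -- strict per-index versions
  have rstrict : ∀ i, 1 ≤ i → i ≤ n → 1 ≤ r i → μ + g * ((r i : ℕ):ℝ) < x i := by
    intro i h1 h2 h3
    have h := K1 (r i - 1) i h1 h2 (by omega)
    rw [Nat.cast_sub h3] at h
    push_cast at h ⊢
    linarith
  have lstrict : ∀ i, 1 ≤ i → i ≤ n → 1 ≤ l i → x i < μ - g * ((l i : ℕ):ℝ) := by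
    intro i h1 h2 h3
    have h := K1' (l i - 1) i h1 h2 (by omega)
    rw [Nat.cast_sub h3] at h
    push_cast at h ⊢
    linarith
  have rl0 : ∀ i, 1 ≤ i → i ≤ n → r i = 0 ∨ l i = 0 := by
    intro i h1 h2
    by_contra h
    push_neg at h
    have hr := rstrict i h1 h2 (by omega)
    have hl := lstrict i h1 h2 (by omega)
    have hrn : (0:ℝ) ≤ g * ((r i : ℕ):ℝ) := mul_nonneg hgpos.le (Nat.cast_nonneg _)
    have hln : (0:ℝ) ≤ g * ((l i : ℕ):ℝ) := mul_nonneg hgpos.le (Nat.cast_nonneg _)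
    linarith
  have PIlt : ∀ i, 1 ≤ i → i ≤ n → 1 ≤ r i + l i →
      g ^ 2 * (((r i:ℕ):ℝ) ^ 2 + ((l i:ℕ):ℝ) ^ 2) < (x i - μ) ^ 2 := by
    intro i h1 h2 h3
    rcases rl0 i h1 h2 with h0 | h0
    · have hl1 : 1 ≤ l i := by omega
      have h := lstrict i h1 h2 hl1
      have hln : (0:ℝ) ≤ g * ((l i:ℕ):ℝ) := mul_nonneg hgpos.le (Nat.cast_nonneg _)
      rw [h0]
      push_cast
      nlinarith [h, hln]
    · have hr1 : 1 ≤ r i := by omega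
      have h := rstrict i h1 h2 hr1
      have hrn : (0:ℝ) ≤ g * ((r i:ℕ):ℝ) := mul_nonneg hgpos.le (Nat.cast_nonneg _)
      rw [h0]
      push_cast
      nlinarith [h, hrn]
  have PIle : ∀ i ∈ Finset.Icc 1 n,
      g ^ 2 * (((r i:ℕ):ℝ) ^ 2 + ((l i:ℕ):ℝ) ^ 2) ≤ (x i - μ) ^ 2 := by
    intro i hi
    rw [Finset.mem_Icc] at hi
    by_cases h0 : 1 ≤ r i + l i
    · exact (PIlt i hi.1 hi.2 h0).le
    · have hr0 : r i = 0 := by omega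
      have hl0 : l i = 0 := by omega
      have hz : g ^ 2 * (((r i:ℕ):ℝ) ^ 2 + ((l i:ℕ):ℝ) ^ 2) = 0 := by
        rw [hr0, hl0]
        norm_num
      rw [hz]
      exact sq_nonneg _
  -- the straddling set
  set T := C.filter (fun i => x i < μ ∧ μ < x (i + 1)) with hTdef
  have hTmem : ∀ i ∈ T, (1 ≤ i ∧ i < n ∧ g < x (i + 1) - x i) ∧ x i < μ ∧ μ < x (i + 1) := by
    intro i hi
    rw [hTdef, Finset.mem_filter] at hi
    exact ⟨hCmem i hi.1, hi.2⟩
  have hTcard : T.card ≤ 1 := by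
    rw [Finset.card_le_one]
    intro i hi j hj
    have hiT := hTmem i hi
    have hjT := hTmem j hj
    by_contra hne
    rcases Nat.lt_or_ge i j with hij | hij
    · have hx : x (i + 1) ≤ x j := mono (i + 1) j (by omega) (by omega) (by omega)
      linarith [hiT.2.2, hjT.2.1]
    · have hji : j < i := by omega
      have hx : x (j + 1) ≤ x i := mono (j + 1) i (by omega) (by omega) (by omega)
      linarith [hjT.2.2, hiT.2.1]
  have hcover : C ⊆ R ∪ L ∪ T := by
    intro i hi
    rw [Finset.mem_union, Finset.mem_union, hRdef, hLdef, hTdef,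
      Finset.mem_filter, Finset.mem_filter, Finset.mem_filter]
    rcases le_or_gt μ (x i) with h1 | h1
    · exact Or.inl (Or.inl ⟨hi, h1⟩)
    · rcases le_or_gt (x (i + 1)) μ with h2 | h2
      · exact Or.inl (Or.inr ⟨hi, h2⟩)
      · exact Or.inr ⟨hi, h1, h2⟩
  have hsab : s ≤ a + b + T.card := by
    have h1 : C.card ≤ (R ∪ L ∪ T).card := Finset.card_le_card hcover
    have h2 : (R ∪ L ∪ T).card ≤ (R ∪ L).card + T.card := Finset.card_union_le _ _
    have h3 : (R ∪ L).card ≤ R.card + L.card := Finset.card_union_le _ _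
    rw [hsC, hadef, hbdef]
    omega
  clear_value T
  rcases Finset.eq_empty_or_nonempty T with hTe | hTne
  · -- Case A : no straddling gap
    have hsab' : s ≤ a + b := by
      rw [hTe] at hsab
      simpa using hsab
    have hab1 : 1 ≤ a + b := by omega
    have hrn : r n = b := by
      rw [hrcard n, hbdef]
      congr 1
      apply Finset.filter_true_of_mem
      intro j hj
      exact (hRmem j hj).1.2.1
    have hl1 : l 1 = a := by
      rw [hlcard 1, hadef]
      congr 1
      apply Finset.filter_true_of_mem
      intro j hj
      exact (hLmem j hj).1.1
    have hstrict : ∑ i ∈ Finset.Icc 1 n, g ^ 2 * (((r i:ℕ):ℝ) ^ 2 + ((l i:ℕ):ℝ) ^ 2)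
        < ∑ i ∈ Finset.Icc 1 n, (x i - μ) ^ 2 := by
      apply Finset.sum_lt_sum PIle
      by_cases hb1 : 1 ≤ b
      · exact ⟨n, Finset.mem_Icc.mpr ⟨by omega, le_rfl⟩, PIlt n (by omega) le_rfl (by omega)⟩
      · have ha1 : 1 ≤ a := by omega
        exact ⟨1, Finset.mem_Icc.mpr ⟨le_rfl, by omega⟩, PIlt 1 le_rfl (by omega) (by omega)⟩
    have hsplit : ∑ i ∈ Finset.Icc 1 n, g ^ 2 * (((r i:ℕ):ℝ) ^ 2 + ((l i:ℕ):ℝ) ^ 2)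
        = g ^ 2 * ((∑ i ∈ Finset.Icc 1 n, ((r i:ℕ):ℝ) ^ 2)
          + ∑ i ∈ Finset.Icc 1 n, ((l i:ℕ):ℝ) ^ 2) := by
      rw [← Finset.mul_sum, Finset.sum_add_distrib]
    have hSb := sumR (fun k => ((k:ℕ):ℝ) ^ 2) fsqmono fsqnn
    have hSa := sumL (fun k => ((k:ℕ):ℝ) ^ 2) fsqmono fsqnn
    set Sa := ∑ k ∈ Finset.Icc 1 a, ((k:ℕ):ℝ) ^ 2 with hSadef
    set Sb := ∑ k ∈ Finset.Icc 1 b, ((k:ℕ):ℝ) ^ 2 with hSbdef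
    have h1 : g ^ 2 * (Sb + Sa) < σ2 * n := by
      have hmul : g ^ 2 * (Sb + Sa) ≤ g ^ 2 * ((∑ i ∈ Finset.Icc 1 n, ((r i:ℕ):ℝ) ^ 2)
          + ∑ i ∈ Finset.Icc 1 n, ((l i:ℕ):ℝ) ^ 2) := by
        apply mul_le_mul_of_nonneg_left _ (sq_nonneg g)
        exact add_le_add hSb hSa
      rw [hsum]
      calc g ^ 2 * (Sb + Sa) ≤ _ := hmul
        _ = _ := hsplit.symm
        _ < _ := hstrict
    have h2 : ((a:ℕ):ℝ) + ((b:ℕ):ℝ) ≥ 0 := by positivity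
    have h12 : 12 * (Sa + Sb) ≥ (((a:ℕ):ℝ) + ((b:ℕ):ℝ)) ^ 3 := by
      have hsa := sumsq a
      have hsb := sumsq b
      rw [← hSadef] at hsa
      rw [← hSbdef] at hsb
      nlinarith [sq_nonneg (((a:ℕ):ℝ) - ((b:ℕ):ℝ)),
        mul_nonneg h2 (sq_nonneg (((a:ℕ):ℝ) - ((b:ℕ):ℝ))),
        Nat.cast_nonneg (α := ℝ) a, Nat.cast_nonneg (α := ℝ) b]
    have h3 : (n:ℝ) ≤ 2 * (((a:ℕ):ℝ) + ((b:ℕ):ℝ)) := by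
      have : (n:ℕ) ≤ 2 * (a + b) := by omega
      push_cast
      exact_mod_cast this
    have h4 : (n:ℝ) ^ 3 ≤ 8 * (((a:ℕ):ℝ) + ((b:ℕ):ℝ)) ^ 3 := by
      have := pow_le_pow_left₀ hnR.le h3 3
      nlinarith [this]
    have h5 : (n:ℝ) ^ 3 ≤ 96 * (Sa + Sb) := by linarith
    have h6 : g ^ 2 * (n:ℝ) ^ 3 ≤ g ^ 2 * (96 * (Sa + Sb)) :=
      mul_le_mul_of_nonneg_left h5 (sq_nonneg g)
    have h7 : g ^ 2 * (n:ℝ) ^ 3 = 96 * σ2 * n := by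
      linear_combination (n:ℝ) * hgn
    linarith
  · -- Case B : straddling gap exists
    obtain ⟨p, hp⟩ := hTne
    have hpT := hTmem p hp
    have hp1 : 1 ≤ p := hpT.1.1
    have hpn : p < n := hpT.1.2.1
    have hgap : g < x (p + 1) - x p := hpT.1.2.2
    set α := μ - x p with hαdef
    set γ := x (p + 1) - μ with hγdef
    have hα : 0 < α := by rw [hαdef]; linarith [hpT.2.1]
    have hγ : 0 < γ := by rw [hγdef]; linarith [hpT.2.2]
    have hαγ : g < α + γ := by rw [hαdef, hγdef]; linarith
    clear_value α γ
    have hsab' : s ≤ a + b + 1 := by omega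
    have Rp : ∀ j ∈ R, p + 1 ≤ j := by
      intro j hj
      by_contra hle
      push_neg at hle
      have hxx := mono j p (hRmem j hj).1.1 (by omega) (by omega)
      linarith [(hRmem j hj).2, hpT.2.1]
    have Lp : ∀ j ∈ L, j < p := by
      intro j hj
      by_contra hle
      push_neg at hle
      have hjn := (hLmem j hj).1.2.1
      have hxx := mono (p + 1) (j + 1) (by omega) (by omega) (by omega)
      linarith [(hLmem j hj).2, hpT.2.2]
    have rz : ∀ i, i ≤ p → r i = 0 := by
      intro i hi
      rw [hrcard i, Finset.card_eq_zero, Finset.filter_eq_empty_iff]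
      intro j hj
      have := Rp j hj
      omega
    have lz : ∀ i, p + 1 ≤ i → l i = 0 := by
      intro i hi
      rw [hlcard i, Finset.card_eq_zero, Finset.filter_eq_empty_iff]
      intro j hj
      have := Lp j hj
      omega
    have K2 : ∀ k : ℕ, ∀ i : ℕ, p + 1 ≤ i → i ≤ n → k ≤ r i → μ + g * (k:ℝ) + γ ≤ x i := by
      intro k
      induction k with
      | zero =>
        intro i hi1 hin _
        have hx1 : x (p + 1) ≤ x i := mono (p + 1) i (by omega) hi1 hin
        rw [hγdef]
        push_cast
        linarith
      | succ k ih =>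
        intro i hi1 hin hri
        have hne : (R.filter (fun j => j < i)).Nonempty := by
          rw [← Finset.card_pos, ← hrcard i]; omega
        set j := (R.filter (fun j => j < i)).max' hne with hjdef
        have hjmem : j ∈ R.filter (fun j => j < i) := Finset.max'_mem _ hne
        rw [Finset.mem_filter] at hjmem
        have hjR := hRmem j hjmem.1
        have hjp : p + 1 ≤ j := Rp j hjmem.1
        have hrj : k ≤ r j := by
          have hsub : (R.filter (fun j => j < i)).erase j ⊆ R.filter (fun e => e < j) := by
            intro e he
            rw [Finset.mem_erase] at he
            rw [Finset.mem_filter] at he ⊢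
            refine ⟨he.2.1, ?_⟩
            have hle : e ≤ j := Finset.le_max' _ e (by rw [Finset.mem_filter]; exact he.2)
            omega
          have hcard := Finset.card_le_card hsub
          rw [Finset.card_erase_of_mem (by rw [Finset.mem_filter]; exact hjmem)] at hcard
          rw [hrcard i] at hri
          rw [hrcard j]
          omega
        have hxj := ih j hjp (by omega) hrj
        have hx1 : x (j + 1) ≤ x i := mono (j + 1) i (by omega) (by omega) hin
        push_cast
        push_cast at hxj
        linarith [hjR.1.2.2]
    have K2' : ∀ k : ℕ, ∀ i : ℕ, 1 ≤ i → i ≤ p → k ≤ l i → x i ≤ μ - g * (k:ℝ) - α := by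
      intro k
      induction k with
      | zero =>
        intro i hi1 hip _
        have hx1 : x i ≤ x p := mono i p hi1 hip (by omega)
        rw [hαdef]
        push_cast
        linarith
      | succ k ih =>
        intro i hi1 hip hli
        have hne : (L.filter (fun j => i ≤ j)).Nonempty := by
          rw [← Finset.card_pos, ← hlcard i]; omega
        set j := (L.filter (fun j => i ≤ j)).min' hne with hjdef
        have hjmem : j ∈ L.filter (fun j => i ≤ j) := Finset.min'_mem _ hne
        rw [Finset.mem_filter] at hjmem
        have hjL := hLmem j hjmem.1
        have hjp : j < p := Lp j hjmem.1
        have hlj : k ≤ l (j + 1) := by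
          have hsub : (L.filter (fun j => i ≤ j)).erase j ⊆ L.filter (fun e => j + 1 ≤ e) := by
            intro e he
            rw [Finset.mem_erase] at he
            rw [Finset.mem_filter] at he ⊢
            refine ⟨he.2.1, ?_⟩
            have hle : j ≤ e := Finset.min'_le _ e (by rw [Finset.mem_filter]; exact he.2)
            omega
          have hcard := Finset.card_le_card hsub
          rw [Finset.card_erase_of_mem (by rw [Finset.mem_filter]; exact hjmem)] at hcard
          rw [hlcard i] at hli
          rw [hlcard (j + 1)]
          omega
        have hxj := ih (j + 1) (by omega) (by omega) hlj
        have hx1 : x i ≤ x j := mono i j hi1 hjmem.2 (by omega)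
        push_cast
        push_cast at hxj
        linarith [hjL.1.2.2]
    -- per-index bounds
    have PBr : ∀ i ∈ Finset.Icc (p + 1) n,
        g ^ 2 * ((r i:ℕ):ℝ) ^ 2 + 2 * g * γ * ((r i:ℕ):ℝ) + γ ^ 2 ≤ (x i - μ) ^ 2 := by
      intro i hi
      rw [Finset.mem_Icc] at hi
      have h := K2 (r i) i hi.1 hi.2 le_rfl
      have h0 : (0:ℝ) ≤ g * ((r i:ℕ):ℝ) := mul_nonneg hgpos.le (Nat.cast_nonneg _)
      nlinarith [h, h0, hγ.le]
    have PBl : ∀ i ∈ Finset.Icc 1 p,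
        g ^ 2 * ((l i:ℕ):ℝ) ^ 2 + 2 * g * α * ((l i:ℕ):ℝ) + α ^ 2 ≤ (x i - μ) ^ 2 := by
      intro i hi
      rw [Finset.mem_Icc] at hi
      have h := K2' (l i) i hi.1 hi.2 le_rfl
      have h0 : (0:ℝ) ≤ g * ((l i:ℕ):ℝ) := mul_nonneg hgpos.le (Nat.cast_nonneg _)
      nlinarith [h, h0, hα.le]
    -- sum splitting
    have hdisj : Disjoint (Finset.Icc 1 p) (Finset.Icc (p + 1) n) := by
      rw [Finset.disjoint_left]
      intro i hi hj
      rw [Finset.mem_Icc] at hi hj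
      omega
    have hunion : Finset.Icc 1 n = Finset.Icc 1 p ∪ Finset.Icc (p + 1) n := by
      ext i
      rw [Finset.mem_union, Finset.mem_Icc, Finset.mem_Icc, Finset.mem_Icc]
      omega
    have hsum2 : (∑ i ∈ Finset.Icc 1 p, (x i - μ) ^ 2)
        + (∑ i ∈ Finset.Icc (p + 1) n, (x i - μ) ^ 2) = σ2 * n := by
      rw [hsum, hunion, Finset.sum_union hdisj]
    have hL1 : ∑ i ∈ Finset.Icc 1 p,
        (g ^ 2 * ((l i:ℕ):ℝ) ^ 2 + 2 * g * α * ((l i:ℕ):ℝ) + α ^ 2)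
        ≤ ∑ i ∈ Finset.Icc 1 p, (x i - μ) ^ 2 := Finset.sum_le_sum PBl
    have hR1 : ∑ i ∈ Finset.Icc (p + 1) n,
        (g ^ 2 * ((r i:ℕ):ℝ) ^ 2 + 2 * g * γ * ((r i:ℕ):ℝ) + γ ^ 2)
        ≤ ∑ i ∈ Finset.Icc (p + 1) n, (x i - μ) ^ 2 := Finset.sum_le_sum PBr
    have hLexp : ∑ i ∈ Finset.Icc 1 p,
        (g ^ 2 * ((l i:ℕ):ℝ) ^ 2 + 2 * g * α * ((l i:ℕ):ℝ) + α ^ 2)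
        = g ^ 2 * (∑ i ∈ Finset.Icc 1 p, ((l i:ℕ):ℝ) ^ 2)
          + 2 * g * α * (∑ i ∈ Finset.Icc 1 p, ((l i:ℕ):ℝ)) + (p:ℝ) * α ^ 2 := by
      rw [Finset.sum_add_distrib, Finset.sum_add_distrib, ← Finset.mul_sum, ← Finset.mul_sum,
        Finset.sum_const, Nat.card_Icc, show p + 1 - 1 = p from by omega, nsmul_eq_mul]
    have hRexp : ∑ i ∈ Finset.Icc (p + 1) n,
        (g ^ 2 * ((r i:ℕ):ℝ) ^ 2 + 2 * g * γ * ((r i:ℕ):ℝ) + γ ^ 2)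
        = g ^ 2 * (∑ i ∈ Finset.Icc (p + 1) n, ((r i:ℕ):ℝ) ^ 2)
          + 2 * g * γ * (∑ i ∈ Finset.Icc (p + 1) n, ((r i:ℕ):ℝ)) + ((n - p : ℕ):ℝ) * γ ^ 2 := by
      rw [Finset.sum_add_distrib, Finset.sum_add_distrib, ← Finset.mul_sum, ← Finset.mul_sum,
        Finset.sum_const, Nat.card_Icc, show n + 1 - (p + 1) = n - p from by omega, nsmul_eq_mul]
    -- partial sums equal full sums
    have hlfull2 : ∑ i ∈ Finset.Icc 1 p, ((l i:ℕ):ℝ) ^ 2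
        = ∑ i ∈ Finset.Icc 1 n, ((l i:ℕ):ℝ) ^ 2 := by
      rw [hunion, Finset.sum_union hdisj]
      have hzero : ∑ i ∈ Finset.Icc (p + 1) n, ((l i:ℕ):ℝ) ^ 2 = 0 := by
        apply Finset.sum_eq_zero
        intro i hi
        rw [Finset.mem_Icc] at hi
        rw [lz i (by omega)]
        norm_num
      rw [hzero, add_zero]
    have hlfull1 : ∑ i ∈ Finset.Icc 1 p, ((l i:ℕ):ℝ)
        = ∑ i ∈ Finset.Icc 1 n, ((l i:ℕ):ℝ) := by
      rw [hunion, Finset.sum_union hdisj]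
      have hzero : ∑ i ∈ Finset.Icc (p + 1) n, ((l i:ℕ):ℝ) = 0 := by
        apply Finset.sum_eq_zero
        intro i hi
        rw [Finset.mem_Icc] at hi
        rw [lz i (by omega)]
        norm_num
      rw [hzero, add_zero]
    have hrfull2 : ∑ i ∈ Finset.Icc (p + 1) n, ((r i:ℕ):ℝ) ^ 2
        = ∑ i ∈ Finset.Icc 1 n, ((r i:ℕ):ℝ) ^ 2 := by
      rw [hunion, Finset.sum_union hdisj]
      have hzero : ∑ i ∈ Finset.Icc 1 p, ((r i:ℕ):ℝ) ^ 2 = 0 := by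
        apply Finset.sum_eq_zero
        intro i hi
        rw [Finset.mem_Icc] at hi
        rw [rz i (by omega)]
        norm_num
      rw [hzero, zero_add]
    have hrfull1 : ∑ i ∈ Finset.Icc (p + 1) n, ((r i:ℕ):ℝ)
        = ∑ i ∈ Finset.Icc 1 n, ((r i:ℕ):ℝ) := by
      rw [hunion, Finset.sum_union hdisj]
      have hzero : ∑ i ∈ Finset.Icc 1 p, ((r i:ℕ):ℝ) = 0 := by
        apply Finset.sum_eq_zero
        intro i hi
        rw [Finset.mem_Icc] at hi
        rw [rz i (by omega)]
        norm_num
      rw [hzero, zero_add]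
    -- counting bounds
    have hSa2 : ∑ k ∈ Finset.Icc 1 a, ((k:ℕ):ℝ) ^ 2 ≤ ∑ i ∈ Finset.Icc 1 p, ((l i:ℕ):ℝ) ^ 2 := by
      rw [hlfull2]
      exact sumL (fun k => ((k:ℕ):ℝ) ^ 2) fsqmono fsqnn
    have hSa1 : ∑ k ∈ Finset.Icc 1 a, ((k:ℕ):ℝ) ≤ ∑ i ∈ Finset.Icc 1 p, ((l i:ℕ):ℝ) := by
      rw [hlfull1]
      exact sumL (fun k => ((k:ℕ):ℝ)) flinmono flinnn
    have hSb2 : ∑ k ∈ Finset.Icc 1 b, ((k:ℕ):ℝ) ^ 2 ≤ ∑ i ∈ Finset.Icc (p + 1) n, ((r i:ℕ):ℝ) ^ 2 := by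
      rw [hrfull2]
      exact sumR (fun k => ((k:ℕ):ℝ) ^ 2) fsqmono fsqnn
    have hSb1 : ∑ k ∈ Finset.Icc 1 b, ((k:ℕ):ℝ) ≤ ∑ i ∈ Finset.Icc (p + 1) n, ((r i:ℕ):ℝ) := by
      rw [hrfull1]
      exact sumR (fun k => ((k:ℕ):ℝ)) flinmono flinnn
    set SqA := ∑ k ∈ Finset.Icc 1 a, ((k:ℕ):ℝ) ^ 2 with hSqAdef
    set SqB := ∑ k ∈ Finset.Icc 1 b, ((k:ℕ):ℝ) ^ 2 with hSqBdef
    set LinA := ∑ k ∈ Finset.Icc 1 a, ((k:ℕ):ℝ) with hLinAdef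
    set LinB := ∑ k ∈ Finset.Icc 1 b, ((k:ℕ):ℝ) with hLinBdef
    -- master inequality
    have master : g ^ 2 * (SqA + SqB) + 2 * g * α * LinA + 2 * g * γ * LinB
        + (p:ℝ) * α ^ 2 + ((n - p : ℕ):ℝ) * γ ^ 2 ≤ σ2 * n := by
      have m1 : g ^ 2 * SqA ≤ g ^ 2 * ∑ i ∈ Finset.Icc 1 p, ((l i:ℕ):ℝ) ^ 2 :=
        mul_le_mul_of_nonneg_left hSa2 (sq_nonneg g)
      have m2 : g ^ 2 * SqB ≤ g ^ 2 * ∑ i ∈ Finset.Icc (p + 1) n, ((r i:ℕ):ℝ) ^ 2 :=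
        mul_le_mul_of_nonneg_left hSb2 (sq_nonneg g)
      have m3 : 2 * g * α * LinA ≤ 2 * g * α * ∑ i ∈ Finset.Icc 1 p, ((l i:ℕ):ℝ) :=
        mul_le_mul_of_nonneg_left hSa1 (by positivity)
      have m4 : 2 * g * γ * LinB ≤ 2 * g * γ * ∑ i ∈ Finset.Icc (p + 1) n, ((r i:ℕ):ℝ) :=
        mul_le_mul_of_nonneg_left hSb1 (by positivity)
      calc g ^ 2 * (SqA + SqB) + 2 * g * α * LinA + 2 * g * γ * LinB
            + (p:ℝ) * α ^ 2 + ((n - p : ℕ):ℝ) * γ ^ 2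
          = (g ^ 2 * SqA + 2 * g * α * LinA + (p:ℝ) * α ^ 2)
            + (g ^ 2 * SqB + 2 * g * γ * LinB + ((n - p : ℕ):ℝ) * γ ^ 2) := by ring
        _ ≤ (g ^ 2 * (∑ i ∈ Finset.Icc 1 p, ((l i:ℕ):ℝ) ^ 2)
              + 2 * g * α * (∑ i ∈ Finset.Icc 1 p, ((l i:ℕ):ℝ)) + (p:ℝ) * α ^ 2)
            + (g ^ 2 * (∑ i ∈ Finset.Icc (p + 1) n, ((r i:ℕ):ℝ) ^ 2)
              + 2 * g * γ * (∑ i ∈ Finset.Icc (p + 1) n, ((r i:ℕ):ℝ)) + ((n - p : ℕ):ℝ) * γ ^ 2) := by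
            apply add_le_add
            · exact add_le_add (add_le_add m1 m3) le_rfl
            · exact add_le_add (add_le_add m2 m4) le_rfl
        _ = (∑ i ∈ Finset.Icc 1 p,
              (g ^ 2 * ((l i:ℕ):ℝ) ^ 2 + 2 * g * α * ((l i:ℕ):ℝ) + α ^ 2))
            + ∑ i ∈ Finset.Icc (p + 1) n,
              (g ^ 2 * ((r i:ℕ):ℝ) ^ 2 + 2 * g * γ * ((r i:ℕ):ℝ) + γ ^ 2) := by
            rw [hLexp, hRexp]
        _ ≤ (∑ i ∈ Finset.Icc 1 p, (x i - μ) ^ 2)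
            + ∑ i ∈ Finset.Icc (p + 1) n, (x i - μ) ^ 2 := add_le_add hL1 hR1
        _ = σ2 * n := hsum2
    -- elementary facts
    have hp1R : (1:ℝ) ≤ (p:ℝ) := by exact_mod_cast hp1
    have hnpR : (1:ℝ) ≤ ((n - p : ℕ):ℝ) := by
      have : 1 ≤ n - p := by omega
      exact_mod_cast this
    have e5 : α ^ 2 ≤ (p:ℝ) * α ^ 2 := by nlinarith only [sq_nonneg α, hp1R]
    have e6 : γ ^ 2 ≤ ((n - p : ℕ):ℝ) * γ ^ 2 := by nlinarith only [sq_nonneg γ, hnpR]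
    have e7 : g ^ 2 / 2 < α ^ 2 + γ ^ 2 := by
      nlinarith only [sq_nonneg (α - γ), hαγ, hgpos, hα, hγ]
    have hLinA0 : 0 ≤ LinA := by
      rw [hLinAdef]
      positivity
    have hLinB0 : 0 ≤ LinB := by
      rw [hLinBdef]
      positivity
    have hcast : (n:ℝ) ≤ 2 * ((a:ℝ) + (b:ℝ) + 1) := by
      have hh : n ≤ 2 * (a + b + 1) := by omega
      have := (Nat.cast_le (α := ℝ)).mpr hh
      push_cast at this
      linarith
    have hn3 : (n:ℝ) ^ 3 ≤ 8 * ((a:ℝ) + (b:ℝ) + 1) ^ 3 := by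
      have hpow := pow_le_pow_left₀ hnR.le hcast 3
      nlinarith only [hpow]
    have hsqa := sumsq a
    have hsqb := sumsq b
    rw [← hSqAdef] at hsqa
    rw [← hSqBdef] at hsqb
    have hlina := sumlin a
    have hlinb := sumlin b
    rw [← hLinAdef] at hlina
    rw [← hLinBdef] at hlinb
    clear_value SqA SqB LinA LinB
    rcases le_total a b with hab | hab
    · -- a ≤ b, use LinA
      have habR : (a:ℝ) ≤ (b:ℝ) := by exact_mod_cast hab
      have hLinAB : LinA ≤ LinB := by
        rw [hLinAdef, hLinBdef]
        apply Finset.sum_le_sum_of_subset_of_nonneg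
        · intro i hi
          rw [Finset.mem_Icc] at hi ⊢
          omega
        · intro i _ _
          positivity
      have e3 : 2 * g ^ 2 * LinA ≤ 2 * g * α * LinA + 2 * g * γ * LinB := by
        nlinarith only [hgpos, hα, hγ, hαγ, hLinA0, hLinAB, mul_nonneg (mul_nonneg (by positivity : (0:ℝ) ≤ 2 * g) hγ.le)
            (by linarith : (0:ℝ) ≤ LinB - LinA),
          mul_nonneg (mul_nonneg (by norm_num : (0:ℝ) ≤ 2) hgpos.le)
            (mul_nonneg (by linarith : (0:ℝ) ≤ α + γ - g) hLinA0)]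
      have keyn : (n:ℝ) ^ 3 ≤ 96 * (SqA + SqB) + 192 * LinA + 48 := by
        have hcube := stmt7_cube a b hab
        linarith only [hcube, hn3, hsqa, hsqb, hlina]
      have h6 := mul_le_mul_of_nonneg_left keyn (sq_nonneg g)
      have h7 : g ^ 2 * (n:ℝ) ^ 3 = 96 * σ2 * n := by
        linear_combination (n:ℝ) * hgn
      linarith only [master, e3, e5, e6, e7, h6, h7]
    · -- b ≤ a, use LinB
      have habR : (b:ℝ) ≤ (a:ℝ) := by exact_mod_cast hab
      have hLinBA : LinB ≤ LinA := by
        rw [hLinAdef, hLinBdef]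
        apply Finset.sum_le_sum_of_subset_of_nonneg
        · intro i hi
          rw [Finset.mem_Icc] at hi ⊢
          omega
        · intro i _ _
          positivity
      have e3 : 2 * g ^ 2 * LinB ≤ 2 * g * α * LinA + 2 * g * γ * LinB := by
        nlinarith only [hgpos, hα, hγ, hαγ, hLinB0, hLinBA, mul_nonneg (mul_nonneg (by positivity : (0:ℝ) ≤ 2 * g) hα.le)
            (by linarith : (0:ℝ) ≤ LinA - LinB),
          mul_nonneg (mul_nonneg (by norm_num : (0:ℝ) ≤ 2) hgpos.le)
            (mul_nonneg (by linarith : (0:ℝ) ≤ α + γ - g) hLinB0)]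
      have keyn : (n:ℝ) ^ 3 ≤ 96 * (SqA + SqB) + 192 * LinB + 48 := by
        have hcube := stmt7_cube b a hab
        linarith only [hcube, hn3, hsqa, hsqb, hlinb]
      have h6 := mul_le_mul_of_nonneg_left keyn (sq_nonneg g)
      have h7 : g ^ 2 * (n:ℝ) ^ 3 = 96 * σ2 * n := by
        linear_combination (n:ℝ) * hgn
      linarith only [master, e3, e5, e6, e7, h6, h7]
end

section
/- Let x_1 ≤ … ≤ x_n be real numbers (n ≥ 2), let β > 0, and let s be the number of critical intervals, i.e., of indices i ∈ {1, …, n−1} with x_{i+1} − x_i > 2√β. Suppose the index set {1, …, n} is partitioned into p consecutive nonempty blocks such that every singleton block {j} with j < n satisfies x_{j+1} − x_j > 2√β. Then p ≤ s + 1 + ⌊(n − s − 1)/2⌋ ≤ (n + s + 1)/2. -/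
open scoped Classical

theorem stmt8 (n : ℕ) (hn : 2 ≤ n) (x : ℕ → ℝ)
    (hmono : ∀ i, 1 ≤ i → i < n → x i ≤ x (i + 1))
    (β : ℝ) (hβ : 0 < β)
    (s : ℕ)
    (hs : s = ((Finset.Ico 1 n).filter
      (fun i => 2 * Real.sqrt β < x (i + 1) - x i)).card)
    -- a partition of {1, …, n} into `p` consecutive nonempty blocks, given by
    -- breakpoints `b 0 = 1 < b 1 < ⋯ < b p = n + 1`; block `k` is `[b k, b (k+1))`
    (p : ℕ) (b : ℕ → ℕ)
    (hb0 : b 0 = 1) (hbp : b p = n + 1)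
    (hbmono : ∀ k, k < p → b k < b (k + 1))
    -- every singleton block `{j}` with `j < n` satisfies `x (j+1) - x j > 2√β`
    (hsingle : ∀ k, k < p → b (k + 1) = b k + 1 → b k < n →
      2 * Real.sqrt β < x (b k + 1) - x (b k)) :
    p ≤ s + 1 + (n - s - 1) / 2 ∧
    ((s + 1 + (n - s - 1) / 2 : ℕ) : ℝ) ≤ ((n : ℝ) + s + 1) / 2 := by
  -- strict monotonicity of b
  have hstrict : ∀ k, k ≤ p → ∀ j, j < k → b j < b k := by
    intro k
    induction k with
    | zero => omega
    | succ m ih =>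
      intro hk j hj
      have h1 := hbmono m (by omega)
      rcases Nat.lt_succ_iff_lt_or_eq.mp hj with h | h
      · exact lt_trans (ih (by omega) j h) h1
      · subst h; exact h1
  have hle0 : ∀ k, k ≤ p → b 0 ≤ b k := by
    intro k hk
    rcases Nat.eq_zero_or_pos k with h | h
    · subst h; exact le_rfl
    · exact le_of_lt (hstrict k hk 0 h)
  -- injectivity of b on [0, p]
  have hinj : ∀ j k, j ≤ p → k ≤ p → b j = b k → j = k := by
    intro j k hj hk hjk
    rcases lt_trichotomy j k with h | h | h
    · exact absurd hjk (Nat.ne_of_lt (hstrict k hk j h))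
    · exact h
    · exact absurd hjk.symm (Nat.ne_of_lt (hstrict j hj k h))
  -- telescoping sum
  have hsum : ∀ k, k ≤ p → ∑ i ∈ Finset.range k, (b (i+1) - b i) = b k - b 0 := by
    intro k
    induction k with
    | zero => simp
    | succ m ih =>
      intro hk
      rw [Finset.sum_range_succ, ih (by omega)]
      have h1 : b 0 ≤ b m := hle0 m (by omega)
      have h2 : b m < b (m+1) := hbmono m (by omega)
      omega
  have hsum_eq : ∑ i ∈ Finset.range p, (b (i+1) - b i) = n := by
    rw [hsum p le_rfl, hbp, hb0]
    omega
  set singl := (Finset.range p).filter (fun k => b (k + 1) = b k + 1) with hsingl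
  -- singletons with b k < n map injectively to critical indices
  have h1 : (singl.filter (fun k => b k < n)).card ≤ s := by
    rw [hs]
    apply Finset.card_le_card_of_injOn (fun k => b k)
    · intro k hk
      simp only [hsingl, Finset.mem_coe, Finset.mem_filter, Finset.mem_range] at hk
      obtain ⟨⟨hkp, hsing⟩, hkn⟩ := hk
      refine Finset.mem_filter.mpr ⟨Finset.mem_Ico.mpr ⟨?_, hkn⟩, hsingle k hkp hsing hkn⟩
      have := hle0 k (le_of_lt hkp)
      show 1 ≤ b k
      omega
    · intro a ha c hc hac
      simp only [hsingl, Finset.mem_coe, Finset.mem_filter, Finset.mem_range] at ha hc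
      exact hinj a c (by omega) (by omega) hac
  -- at most one singleton with b k ≥ n (namely b k = n)
  have h2 : (singl.filter (fun k => ¬ b k < n)).card ≤ 1 := by
    apply Finset.card_le_one.mpr
    intro a ha c hc
    simp only [hsingl, Finset.mem_filter, Finset.mem_range, not_lt] at ha hc
    obtain ⟨⟨hap, _⟩, han⟩ := ha
    obtain ⟨⟨hcp, _⟩, hcn⟩ := hc
    have ha' : b a < n + 1 := by rw [← hbp]; exact hstrict p le_rfl a hap
    have hc' : b c < n + 1 := by rw [← hbp]; exact hstrict p le_rfl c hcp
    exact hinj a c (by omega) (by omega) (by omega)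
  have hcard : singl.card ≤ s + 1 := by
    have := Finset.card_filter_add_card_filter_not
      (s := singl) (p := fun k => b k < n)
    omega
  -- main counting inequality
  have hkey : 2 * p ≤ n + singl.card := by
    have hpt : ∑ k ∈ Finset.range p, (2:ℕ) ≤
        ∑ k ∈ Finset.range p, ((b (k+1) - b k) + (if b (k + 1) = b k + 1 then 1 else 0)) := by
      apply Finset.sum_le_sum
      intro k hk
      have := hbmono k (Finset.mem_range.mp hk)
      split <;> omega
    rw [Finset.sum_add_distrib, hsum_eq] at hpt
    have hcf : ∑ k ∈ Finset.range p, (if b (k + 1) = b k + 1 then (1:ℕ) else 0) = singl.card := by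
      rw [hsingl, Finset.card_filter]
    rw [hcf] at hpt
    simpa [Finset.sum_const, Nat.smul_one_eq_cast, two_mul, mul_comm] using hpt
  have hsn : s ≤ n - 1 := by
    rw [hs]
    calc ((Finset.Ico 1 n).filter (fun i => 2 * Real.sqrt β < x (i + 1) - x i)).card
        ≤ (Finset.Ico 1 n).card := Finset.card_filter_le _ _
      _ = n - 1 := by rw [Nat.card_Ico]
  have hmain : 2 * p ≤ n + s + 1 := by omega
  constructor
  · omega
  · have h3 : 2 * (s + 1 + (n - s - 1) / 2) ≤ n + s + 1 := by omega
    have h4 : ((2 * (s + 1 + (n - s - 1) / 2) : ℕ) : ℝ) ≤ ((n + s + 1 : ℕ) : ℝ) := by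
      exact_mod_cast h3
    push_cast at h4 ⊢
    linarith
end

section
/- Let β > 0 and let x_1 ≤ … ≤ x_n be the elements of a nonempty finite multiset S in nondecreasing order. If the 1-D DLV algorithm run on S with bound β outputs a singleton block consisting of the element at position j with j < n, then σ²({x_j, x_{j+1}}) > β; equivalently, x_{j+1} − x_j > 2√β, i.e., position j is a critical interval. -/
open scoped Classical

/-- One left-to-right scan of the 1-D DLV algorithm: `V` is the current block,
the list holds the remaining elements (in nondecreasing order). If adding the next
element would push the variance of the current block above `β`, the current block
is output and a new block is started. -/
noncomputable def dlvAux (β : ℝ) : Multiset ℝ → List ℝ → List (Multiset ℝ)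
  | V, [] => [V]
  | V, x :: xs =>
      if β < mvar (x ::ₘ V) then V :: dlvAux β {x} xs else dlvAux β (x ::ₘ V) xs

/-- The 1-D DLV algorithm run on a finite multiset `S` with bounding variance `β`:
sort the elements in nondecreasing order and scan left to right, starting from an
empty current block (after the first element the current block is `{x₁}`, since a
singleton has variance `0`). The output is the list of completed blocks. -/
noncomputable def dlv (β : ℝ) (S : Multiset ℝ) : List (Multiset ℝ) :=
  match S.sort (· ≤ ·) with
  | [] => []
  | x :: xs => dlvAux β {x} xs

lemma dlvAux_head (β : ℝ) : ∀ (l : List ℝ) (V : Multiset ℝ),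
    ∃ B t, dlvAux β V l = B :: t ∧ V ≤ B := by
  intro l
  induction l with
  | nil => intro V; exact ⟨V, [], rfl, le_refl V⟩
  | cons x xs ih =>
    intro V
    by_cases h : β < mvar (x ::ₘ V)
    · exact ⟨V, dlvAux β {x} xs, by simp [dlvAux, h], le_refl V⟩
    · obtain ⟨B, t, hBt, hle⟩ := ih (x ::ₘ V)
      exact ⟨B, t, by simp [dlvAux, h, hBt],
        le_trans (Multiset.le_cons_self V x) hle⟩

lemma dlv_main (β : ℝ) : ∀ (l : List ℝ) (V : Multiset ℝ), V ≠ 0 →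
    ∀ (k : ℕ) (a : ℝ),
    (dlvAux β V l).getD k 0 = {a} →
    (((dlvAux β V l).take k).map Multiset.card).sum + 1 < Multiset.card V + l.length →
    β < mvar {a, l.getD ((((dlvAux β V l).take k).map Multiset.card).sum + 1
        - Multiset.card V) 0} := by
  intro l
  induction l with
  | nil =>
    intro V hV k a hka hlt
    simp only [dlvAux] at hka hlt
    rcases k with _ | k
    · simp only [List.getD, List.getD_cons_zero] at hka
      subst hka
      simp at hlt
    · simp [List.getD] at hka
  | cons x xs ih =>
    intro V hV k a hka hlt
    by_cases h : β < mvar (x ::ₘ V)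
    · -- new block starts at x
      have hd : dlvAux β V (x :: xs) = V :: dlvAux β {x} xs := by
        simp [dlvAux, h]
      rw [hd] at hka hlt ⊢
      rcases k with _ | k
      · -- this block is V = {a}; next element is x
        simp only [List.getD_cons_zero] at hka
        subst hka
        simp only [List.take_zero, List.map_nil, List.sum_nil,
          Multiset.card_singleton] at hlt ⊢
        have : (1 : ℕ) - 1 = 0 := rfl
        rw [this, List.getD_cons_zero]
        have : ({a, x} : Multiset ℝ) = x ::ₘ {a} := Multiset.cons_swap a x 0
        rw [this]
        exact h
      · simp only [List.getD_cons_succ] at hka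
        simp only [List.take_succ_cons, List.map_cons, List.sum_cons] at hlt ⊢
        have h1 : (((dlvAux β {x} xs).take k).map Multiset.card).sum + 1
            < Multiset.card ({x} : Multiset ℝ) + xs.length := by
          simp only [Multiset.card_singleton]
          simp only [List.length_cons] at hlt
          omega
        have := ih {x} (by simp) k a hka h1
        simp only [Multiset.card_singleton] at this
        have hidx : Multiset.card V
            + ((((dlvAux β {x} xs).take k).map Multiset.card).sum + 1)
            - Multiset.card V
            = ((((dlvAux β {x} xs).take k).map Multiset.card).sum) + 1 := by omega
        rw [show Multiset.card V + (((dlvAux β {x} xs).take k).map Multiset.card).sum + 1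
            = Multiset.card V + ((((dlvAux β {x} xs).take k).map Multiset.card).sum + 1)
            by omega, hidx, List.getD_cons_succ]
        simpa using this
    · -- x joins the current block
      have hd : dlvAux β V (x :: xs) = dlvAux β (x ::ₘ V) xs := by
        simp [dlvAux, h]
      rw [hd] at hka hlt ⊢
      obtain ⟨B, t, hBt, hle⟩ := dlvAux_head β xs (x ::ₘ V)
      have hBcard : Multiset.card V + 1 ≤ Multiset.card B := by
        have := Multiset.card_le_card hle
        simpa using this
      have hV1 : 1 ≤ Multiset.card V := Multiset.card_pos.mpr hV
      -- k cannot be 0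
      rcases k with _ | k
      · exfalso
        rw [hBt] at hka
        simp only [List.getD_cons_zero] at hka
        rw [hka] at hBcard
        simp only [Multiset.card_singleton] at hBcard
        omega
      · have h1 : (((dlvAux β (x ::ₘ V) xs).take (k+1)).map Multiset.card).sum + 1
            < Multiset.card (x ::ₘ V) + xs.length := by
          simp only [Multiset.card_cons]
          simp only [List.length_cons] at hlt
          omega
        have := ih (x ::ₘ V) (by simp) (k+1) a hka h1
        -- the sum over first k+1 blocks is at least card B ≥ card V + 1
        have hsum : Multiset.card B
            ≤ (((dlvAux β (x ::ₘ V) xs).take (k+1)).map Multiset.card).sum := by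
          rw [hBt]
          simp only [List.take_succ_cons, List.map_cons, List.sum_cons]
          omega
        set s := (((dlvAux β (x ::ₘ V) xs).take (k+1)).map Multiset.card).sum with hs
        have hges : Multiset.card V + 1 ≤ s := le_trans hBcard hsum
        simp only [Multiset.card_cons] at this
        have hidx : s + 1 - Multiset.card V = (s - (Multiset.card V + 1)) + 1 + 1 := by
          omega
        have hidx2 : s + 1 - (Multiset.card V + 1) = (s - (Multiset.card V + 1)) + 1 := by
          omega
        rw [hidx, List.getD_cons_succ]
        rw [hidx2] at this
        exact this

lemma mvar_pair (a b : ℝ) : mvar {a, b} = (b - a)^2 / 4 := by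
  simp [mvar, mmean, Multiset.insert_eq_cons]
  ring

theorem stmt12 (β : ℝ) (hβ : 0 < β) (S : Multiset ℝ) (hS : S ≠ 0)
    (n : ℕ) (hn : n = S.card)
    -- `x i` is the element of `S` at (1-indexed) position `i` in nondecreasing order
    (x : ℕ → ℝ) (hx : ∀ i, x i = (S.sort (· ≤ ·)).getD (i - 1) 0)
    -- block `k` (0-indexed) of the DLV output is a singleton whose element sits at
    -- (1-indexed) position `j` in the sorted order
    (k : ℕ) (hk : k < (dlv β S).length)
    (j : ℕ) (hj : j = (((dlv β S).take k).map Multiset.card).sum + 1)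
    (hsingle : (dlv β S).get ⟨k, hk⟩ = {x j})
    (hjn : j < n) :
    β < mvar {x j, x (j + 1)} ∧ 2 * Real.sqrt β < x (j + 1) - x j := by
  classical
  -- set up the sorted list
  obtain ⟨h0, t, hsort⟩ : ∃ h0 t, S.sort (· ≤ ·) = h0 :: t := by
    rcases hl : S.sort (· ≤ ·) with _ | ⟨h0, t⟩
    · exfalso
      apply hS
      have := congrArg Multiset.ofList hl
      rwa [Multiset.sort_eq] at this
    · exact ⟨h0, t, rfl⟩
  have hdlv : dlv β S = dlvAux β {h0} t := by
    unfold dlv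
    rw [hsort]
  have hlen : (S.sort (· ≤ ·)).length = n := by
    rw [Multiset.length_sort, hn]
  have hget : (dlv β S).getD k 0 = {x j} := by
    rw [List.getD_eq_getElem _ _ hk]
    exact hsingle
  rw [hdlv] at hget hj
  -- j - 1 = the sum s
  set s := (((dlvAux β {h0} t).take k).map Multiset.card).sum with hs
  have hjs : j = s + 1 := hj
  have hlt : s + 1 < Multiset.card ({h0} : Multiset ℝ) + t.length := by
    simp only [Multiset.card_singleton]
    have : (1 : ℕ) + t.length = n := by
      rw [← hlen, hsort]
      simp [Nat.add_comm]
    omega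
  have hmain := dlv_main β t {h0} (by simp) k (x j) hget hlt
  simp only [Multiset.card_singleton, Nat.add_sub_cancel] at hmain
  -- identify t.getD s 0 with x (j+1)
  have hnext : t.getD s 0 = x (j + 1) := by
    rw [hx (j + 1)]
    rw [hsort]
    have : j + 1 - 1 = s + 1 := by omega
    rw [this, List.getD_cons_succ]
  rw [hnext] at hmain
  refine ⟨hmain, ?_⟩
  -- monotonicity: x j ≤ x (j+1)
  have hsorted : (S.sort (· ≤ ·)).Pairwise (· ≤ ·) := S.pairwise_sort _
  have hj1 : j - 1 < (S.sort (· ≤ ·)).length := by omega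
  have hj2 : j < (S.sort (· ≤ ·)).length := by omega
  have hmono : x j ≤ x (j + 1) := by
    rw [hx j, hx (j + 1)]
    rw [List.getD_eq_getElem _ _ hj1, List.getD_eq_getElem _ _ (by omega : j + 1 - 1 < (S.sort (· ≤ ·)).length)]
    exact List.Pairwise.rel_get_of_lt hsorted (by simp; omega)
  -- conclude from the variance bound
  rw [mvar_pair] at hmain
  nlinarith [Real.sq_sqrt hβ.le, Real.sqrt_nonneg β]
end

section
/- For every ω > 0 and every integer n ≥ 39, the 1-D DLV algorithm run on S_n with bounding variance β_n = 24·σ²(S_n)/(n+2)² outputs a partition in which every block has variance 0 (the element −ω and the element ω are each isolated in singleton blocks); consequently the ratio score of this partition equals 0. -/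
open scoped Classical

lemma dlvAux_cons (β : ℝ) (V : Multiset ℝ) (x : ℝ) (xs : List ℝ) :
    dlvAux β V (x :: xs) =
      if β < mvar (x ::ₘ V) then V :: dlvAux β {x} xs else dlvAux β (x ::ₘ V) xs := rfl

lemma dlv_eq (β : ℝ) (S : Multiset ℝ) (x : ℝ) (xs : List ℝ)
    (h : S.sort (· ≤ ·) = x :: xs) : dlv β S = dlvAux β {x} xs := by
  rw [dlv, h]

lemma mvar_replicate (j : ℕ) (c : ℝ) : mvar (Multiset.replicate j c) = 0 := by
  cases j with
  | zero => simp [mvar]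
  | succ k =>
    have h : mmean (Multiset.replicate (k+1) c) = c := by
      simp only [mmean, Multiset.sum_replicate, Multiset.card_replicate, nsmul_eq_mul]
      field_simp
    rw [mvar, h]
    simp [Multiset.map_replicate, Multiset.sum_replicate]

lemma mvar_singleton (a : ℝ) : mvar {a} = 0 := by
  simpa using mvar_replicate 1 a

lemma dlvAux_replicate (β : ℝ) (hβ : 0 ≤ β) (c : ℝ) :
    ∀ k m : ℕ, dlvAux β (Multiset.replicate m c) (List.replicate k c)
      = [Multiset.replicate (m + k) c] := by
  intro k
  induction k with
  | zero => intro m; simp [dlvAux]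
  | succ j ih =>
    intro m
    rw [List.replicate_succ, dlvAux_cons]
    have h : c ::ₘ Multiset.replicate m c = Multiset.replicate (m+1) c := by
      rw [Multiset.replicate_succ]
    rw [if_neg (by rw [h, mvar_replicate]; linarith), h, ih (m+1),
      show m + 1 + j = m + (j + 1) from by omega]

theorem stmt13 (ω : ℝ) (hω : 0 < ω) (n : ℕ) (hn : 39 ≤ n) :
    (∀ V ∈ dlv (24 * mvar (Sn ω n) / ((n : ℝ) + 2) ^ 2) (Sn ω n), mvar V = 0) ∧
    ({-ω} : Multiset ℝ) ∈ dlv (24 * mvar (Sn ω n) / ((n : ℝ) + 2) ^ 2) (Sn ω n) ∧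
    ({ω} : Multiset ℝ) ∈ dlv (24 * mvar (Sn ω n) / ((n : ℝ) + 2) ^ 2) (Sn ω n) ∧
    ((dlv (24 * mvar (Sn ω n) / ((n : ℝ) + 2) ^ 2) (Sn ω n)).map mvar).sum
      / mvar (Sn ω n) = 0 := by
  have hN : (39:ℝ) ≤ n := by exact_mod_cast hn
  have hN0 : (0:ℝ) < n := by linarith
  have hNne : (n:ℝ) ≠ 0 := ne_of_gt hN0
  have hN2 : (n:ℝ) + 2 ≠ 0 := by positivity
  set c : ℝ := ω + 3 * ω / n with hc
  set β : ℝ := 24 * mvar (Sn ω n) / ((n : ℝ) + 2) ^ 2 with hβdef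
  -- variance of Sn
  have hvar : mvar (Sn ω n) = 2*ω^2*(2*(n:ℝ)^2+8*(n:ℝ)+9)/((n:ℝ)*((n:ℝ)+2)^2) := by
    have hcard : ((Sn ω n).card : ℝ) = (n:ℝ) + 2 := by
      simp [Sn]; ring
    have hsum : (Sn ω n).sum = ((n:ℝ)+3)*ω := by
      simp [Sn, Multiset.sum_replicate, nsmul_eq_mul]
      field_simp
    have hmean : mmean (Sn ω n) = ((n:ℝ)+3)*ω/((n:ℝ)+2) := by
      rw [mmean, hsum, hcard]
    rw [mvar, hmean, hcard]
    simp only [Sn, Multiset.map_add, Multiset.map_replicate, Multiset.sum_add,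
      Multiset.sum_replicate, nsmul_eq_mul, Multiset.insert_eq_cons, Multiset.map_cons,
      Multiset.sum_cons, Multiset.map_singleton, Multiset.sum_singleton]
    field_simp
    ring
  have hβ : β = 48*ω^2*(2*(n:ℝ)^2+8*(n:ℝ)+9)/((n:ℝ)*((n:ℝ)+2)^4) := by
    rw [hβdef, hvar]; field_simp; ring
  have hβ0 : 0 ≤ β := by rw [hβ]; positivity
  -- key inequality: β < 9ω²/(4n²)
  have hkey : β < 9*ω^2/(4*(n:ℝ)^2) := by
    rw [hβ, div_lt_div_iff₀ (by positivity) (by positivity)]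
    have h1 : 0 ≤ ((n:ℝ)-39)*(n:ℝ)^3 :=
      mul_nonneg (by linarith) (by positivity)
    have h2 : 0 ≤ ((n:ℝ)-39)*(n:ℝ)^2 :=
      mul_nonneg (by linarith) (by positivity)
    have h3 : 0 ≤ ((n:ℝ)-39)*(n:ℝ) :=
      mul_nonneg (by linarith) (by positivity)
    have hP : 0 < 9*(n:ℝ)^4 - 312*(n:ℝ)^3 - 1320*(n:ℝ)^2 - 1440*(n:ℝ) + 144 := by
      nlinarith [h1, h2, h3]
    nlinarith [mul_pos (mul_pos (pow_pos hω 2) hN0) hP]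
  have hβω : β < ω^2 := by
    have : 9*ω^2/(4*(n:ℝ)^2) ≤ ω^2 := by
      rw [div_le_iff₀ (by positivity)]
      nlinarith [mul_nonneg (sq_nonneg ω) (show (0:ℝ) ≤ 4*(n:ℝ)^2 - 9 by nlinarith)]
    linarith
  -- sorted form
  have hsort : (Sn ω n).sort (· ≤ ·) = -ω :: ω :: List.replicate n c := by
    have hωc : ω ≤ c := by
      have : 0 < 3 * ω / n := by positivity
      simp only [hc]; linarith
    have hperm : List.Perm ((Sn ω n).sort (· ≤ ·)) (-ω :: ω :: List.replicate n c) := by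
      rw [← Multiset.coe_eq_coe, Multiset.sort_eq]
      simp [Sn, ← Multiset.coe_replicate]
      exact Or.inr hc.symm
    refine List.Perm.eq_of_pairwise' (Multiset.pairwise_sort _ _) ?_ hperm
    refine List.pairwise_cons.mpr ⟨?_, List.pairwise_cons.mpr ⟨?_, ?_⟩⟩
    · intro b hb
      simp [List.mem_replicate] at hb
      rcases hb with h | ⟨_, h⟩ <;> rw [h] <;> linarith
    · intro b hb
      simp [List.mem_replicate] at hb
      rw [hb.2]; exact hωc
    · exact List.pairwise_replicate.mpr (Or.inr le_rfl)
  -- run the algorithm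
  have hrun : dlv β (Sn ω n) = [{-ω}, {ω}, Multiset.replicate n c] := by
    rw [dlv_eq β (Sn ω n) _ _ hsort]
    have h1 : mvar (ω ::ₘ ({-ω} : Multiset ℝ)) = ω^2 := by
      have : (ω ::ₘ ({-ω} : Multiset ℝ)) = {-ω, ω} := by
        rw [Multiset.insert_eq_cons]; exact Multiset.cons_swap _ _ _
      rw [this, mvar_pair]; ring
    have hn1 : n = (n - 1) + 1 := by omega
    rw [dlvAux_cons, if_pos (by rw [h1]; exact hβω)]
    rw [hn1, List.replicate_succ, dlvAux_cons]
    have h2 : mvar (c ::ₘ ({ω} : Multiset ℝ)) = 9*ω^2/(4*(n:ℝ)^2) := by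
      have : (c ::ₘ ({ω} : Multiset ℝ)) = {ω, c} := by
        rw [Multiset.insert_eq_cons]; exact Multiset.cons_swap _ _ _
      rw [this, mvar_pair, hc]
      field_simp
      ring
    rw [if_pos (by rw [h2]; exact hkey)]
    have := dlvAux_replicate β hβ0 c (n-1) 1
    rw [show ({c} : Multiset ℝ) = Multiset.replicate 1 c by simp, this,
      show 1 + (n - 1) = n from by omega, show n - 1 + 1 = n from by omega]
  rw [hrun]
  refine ⟨?_, by simp, by simp, ?_⟩
  · intro V hV
    simp only [List.mem_cons, List.not_mem_nil, or_false] at hV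
    rcases hV with h | h | h <;> rw [h]
    · exact mvar_singleton _
    · exact mvar_singleton _
    · exact mvar_replicate _ _
  · simp [mvar_singleton, mvar_replicate]
end

section
/- Fix ω > 0. For each integer n ≥ 1, let P(n) be any partition of the multiset S_n into sub-multisets such that one block equals exactly the two-element multiset {−ω, ω} and every other block contains only copies of the value ω + 3ω/n. Then the ratio score of P(n) equals ω²/σ²(S_n), and therefore the ratio score of P(n) tends to +∞ as n → ∞. -/
open scoped Classical

lemma mvar_const (S : Multiset ℝ) (c : ℝ) (h : ∀ y ∈ S, y = c) : mvar S = 0 := by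
  rcases eq_or_ne S 0 with rfl | hS
  · simp [mvar]
  · have hcard : (S.card : ℝ) ≠ 0 := by
      simpa using fun h' => hS (Multiset.card_eq_zero.mp h')
    have hrep : S = Multiset.replicate S.card c := Multiset.eq_replicate_of_mem h
    have hm : mmean S = c := by
      rw [mmean, hrep]; simp [Multiset.sum_replicate]
      field_simp
    have : (S.map (fun x => (x - mmean S) ^ 2)).sum = 0 := by
      apply Multiset.sum_eq_zero
      intro x hx
      obtain ⟨y, hy, rfl⟩ := Multiset.mem_map.mp hx
      rw [hm, h y hy]; ring
    rw [mvar, this, zero_div]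

lemma mvar_pair_s14 (ω : ℝ) : mvar ({-ω, ω} : Multiset ℝ) = ω ^ 2 := by
  simp [mvar, mmean]

lemma mvar_Sn (ω : ℝ) (n : ℕ) (hn : 1 ≤ n) :
    mvar (Sn ω n) = ω ^ 2 * (4 * (n:ℝ)^2 + 16 * n + 18) / ((n:ℝ) * ((n:ℝ) + 2) ^ 2) := by
  have hn0 : (n:ℝ) ≠ 0 := Nat.cast_ne_zero.mpr (by omega)
  have hn1 : (1:ℝ) ≤ n := by exact_mod_cast hn
  have hn2 : (n:ℝ) + 2 ≠ 0 := by positivity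
  have hm : mmean (Sn ω n) = ((n:ℝ) + 3) * ω / ((n:ℝ) + 2) := by
    simp [mmean, Sn, Multiset.sum_replicate]
    field_simp
    ring
  rw [mvar, hm]
  simp [Sn, Multiset.sum_replicate]
  field_simp
  ring

theorem stmt14 (ω : ℝ) (hω : 0 < ω) (p : ℕ → ℕ)
    (P : (n : ℕ) → Fin (p n) → Multiset ℝ)
    (hpart : ∀ n, 1 ≤ n → ∑ i, P n i = Sn ω n)
    (hblock : ∀ n, 1 ≤ n → ∃ i₀ : Fin (p n), P n i₀ = ({-ω, ω} : Multiset ℝ) ∧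
      ∀ i, i ≠ i₀ → ∀ y ∈ P n i, y = ω + 3 * ω / n) :
    (∀ n, 1 ≤ n → (∑ i, mvar (P n i)) / mvar (Sn ω n) = ω ^ 2 / mvar (Sn ω n)) ∧
    Filter.Tendsto (fun n : ℕ => (∑ i, mvar (P n i)) / mvar (Sn ω n))
      Filter.atTop Filter.atTop := by
  have key : ∀ n, 1 ≤ n → (∑ i, mvar (P n i)) = ω ^ 2 := by
    intro n hn
    obtain ⟨i₀, hP0, hrest⟩ := hblock n hn
    rw [Finset.sum_eq_single_of_mem i₀ (Finset.mem_univ i₀)]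
    · rw [hP0, mvar_pair_s14]
    · intro i _ hi
      exact mvar_const _ _ (hrest i hi)
  have hratio : ∀ n, 1 ≤ n → (∑ i, mvar (P n i)) / mvar (Sn ω n)
      = (n:ℝ) * ((n:ℝ) + 2) ^ 2 / (4 * (n:ℝ) ^ 2 + 16 * n + 18) := by
    intro n hn
    have hn1 : (1:ℝ) ≤ n := by exact_mod_cast hn
    have hω2 : ω ^ 2 ≠ 0 := by positivity
    have hn0 : (0:ℝ) < n := by linarith
    rw [key n hn, mvar_Sn ω n hn]
    have hA : 4 * (n:ℝ) ^ 2 + 16 * n + 18 ≠ 0 := by positivity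
    have hB : (n:ℝ) * ((n:ℝ) + 2) ^ 2 ≠ 0 := by positivity
    field_simp
  constructor
  · intro n hn; rw [key n hn]
  · have htend : Filter.Tendsto (fun n : ℕ => (n:ℝ) / 5) Filter.atTop Filter.atTop :=
      Filter.Tendsto.atTop_div_const (by norm_num) (tendsto_natCast_atTop_atTop (R := ℝ))
    refine Filter.tendsto_atTop_mono' Filter.atTop ?_ htend
    filter_upwards [Filter.eventually_ge_atTop 1] with n hn
    rw [hratio n hn]
    have hn1 : (1:ℝ) ≤ n := by exact_mod_cast hn
    rw [div_le_div_iff₀ (by norm_num) (by nlinarith)]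
    nlinarith
end
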